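/- arXiv:1901.05245 — 5 statements merged into one kernel-verified Lean document; each statement's English description precedes it below -/
import Mathlib

section
/- Let c = (c_1,...,c_k) ∈ ℝ^k with not all c_i equal and k ≤ dim H. If A is a scalar multiple of the identity on H, then W_c(A) is a singleton; conversely, if W_c(A) is a singleton then A is a scalar multiple of the identity. -/
open scoped Pointwise

local notation "⟪" x ", " y "⟫" => @inner ℂ _ _ x y

lemma orthonormal_snoc' {H : Type*} [NormedAddCommGroup H] [InnerProductSpace ℂ H]
    {m : ℕ} {f : Fin m → H} (hf : Orthonormal ℂ f) {v : H} (hv : ‖v‖ = 1)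
    (hov : ∀ i, ⟪f i, v⟫ = 0) : Orthonormal ℂ (Fin.snoc f v) := by
  rw [orthonormal_iff_ite] at hf ⊢
  intro i j
  refine Fin.lastCases ?_ (fun i => ?_) i <;> refine Fin.lastCases ?_ (fun j => ?_) j <;>
    simp only [Fin.snoc_last, Fin.snoc_castSucc]
  · rw [if_pos trivial, inner_self_eq_norm_sq_to_K, hv]
    norm_num
  · rw [if_neg (Fin.castSucc_lt_last j).ne']
    rw [← inner_eq_zero_symm]
    exact hov j
  · rw [if_neg (Fin.castSucc_lt_last i).ne]
    exact hov i
  · rw [hf i j]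
    congr 1
    simp [Fin.ext_iff]

lemma exists_orthonormal_extension' {H : Type*} [NormedAddCommGroup H] [InnerProductSpace ℂ H]
    (k : ℕ) (hk : (k : Cardinal) ≤ Module.rank ℂ H) :
    ∀ d m (hm : m + d = k), ∀ f : Fin m → H, Orthonormal ℂ f →
      ∃ g : Fin k → H, Orthonormal ℂ g ∧
        ∀ i : Fin m, g (Fin.castLE (Nat.le.intro hm) i) = f i := by
  intro d
  induction d with
  | zero =>
    intro m hm f hf
    refine ⟨f ∘ Fin.cast (by omega), hf.comp _ (fun a b hab => by simpa [Fin.ext_iff] using hab),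
      fun i => ?_⟩
    simp only [Function.comp_apply]
    congr 1
  | succ d ih =>
    intro m hm f hf
    set K := Submodule.span ℂ (Set.range f) with hK
    haveI : FiniteDimensional ℂ K := FiniteDimensional.span_of_finite ℂ (Set.finite_range f)
    have hKne : K ≠ ⊤ := by
      intro htop
      have h1 : Module.finrank ℂ K ≤ m := by
        simpa [Set.finrank, hK] using finrank_range_le_card (R := ℂ) f
      have h2 : Module.rank ℂ H ≤ (m : Cardinal) := by
        rw [← rank_top ℂ H, ← htop]
        rw [← Module.finrank_eq_rank]
        exact_mod_cast Nat.cast_le.mpr h1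
      have := Nat.cast_le.mp (hk.trans h2)
      omega
    have hbot : Kᗮ ≠ ⊥ := by
      rwa [Ne, Submodule.orthogonal_eq_bot_iff]
    obtain ⟨v, hvK, hv0⟩ := Submodule.exists_mem_ne_zero_of_ne_bot hbot
    set w : H := (‖v‖⁻¹ : ℂ) • v with hw
    have hwn : ‖w‖ = 1 := by
      rw [hw, norm_smul]
      simp [inv_mul_cancel₀ (norm_ne_zero_iff.mpr hv0)]
    have hwo : ∀ i, ⟪f i, w⟫ = 0 := by
      intro i
      rw [hw, inner_smul_right]
      have : ⟪f i, v⟫ = 0 :=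
        (Submodule.mem_orthogonal K v).mp hvK (f i) (Submodule.subset_span ⟨i, rfl⟩)
      simp [this]
    obtain ⟨g, hg, hgi⟩ := ih (m + 1) (by omega) (Fin.snoc f w) (orthonormal_snoc' hf hwn hwo)
    refine ⟨g, hg, fun i => ?_⟩
    have := hgi i.castSucc
    rw [Fin.snoc_castSucc] at this
    convert this using 2
    exact Fin.ext rfl

noncomputable def cNumRange {H : Type*} [NormedAddCommGroup H] [InnerProductSpace ℂ H]
    (k : ℕ) (c : Fin k → ℝ) (A : H →L[ℂ] H) : Set ℂ :=
  { z | ∃ e : Fin k → H, Orthonormal ℂ e ∧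
      z = ∑ j, (c j : ℂ) * (inner ℂ (e j) (A (e j)) : ℂ) }

theorem stmt4 {H : Type*} [NormedAddCommGroup H] [InnerProductSpace ℂ H]
    (k : ℕ) (hk1 : 1 ≤ k) (c : Fin k → ℝ) (hk : (k : Cardinal) ≤ Module.rank ℂ H)
    (hc : ∃ i j, c i ≠ c j) (A : H →L[ℂ] H) :
    (∃ lam : ℂ, A = lam • (1 : H →L[ℂ] H)) ↔ (∃ z, cNumRange k c A = {z}) := by
  obtain ⟨b, hb⟩ := exists_linearIndependent_of_le_rank (R := ℂ) (M := H) hk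
  have hex : ∃ e : Fin k → H, Orthonormal ℂ e := by
    haveI : WellFoundedLT (Fin k) := Finite.to_wellFoundedLT
    exact ⟨InnerProductSpace.gramSchmidtNormed ℂ b, InnerProductSpace.gramSchmidtNormed_orthonormal hb⟩
  constructor
  · rintro ⟨lam, rfl⟩
    refine ⟨∑ j, (c j : ℂ) * lam, ?_⟩
    rw [Set.eq_singleton_iff_unique_mem]
    have key : ∀ e : Fin k → H, Orthonormal ℂ e →
        ∑ j, (c j : ℂ) * ⟪e j, (lam • (1 : H →L[ℂ] H)) (e j)⟫ = ∑ j, (c j : ℂ) * lam := by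
      intro e he
      refine Finset.sum_congr rfl fun j _ => ?_
      have h1 : ⟪e j, e j⟫ = 1 := by
        rw [inner_self_eq_norm_sq_to_K, he.1 j]; norm_num
      simp [inner_smul_right, h1, he.1 j]
    obtain ⟨e0, he0⟩ := hex
    constructor
    · exact ⟨e0, he0, (key e0 he0).symm⟩
    · rintro x ⟨e, he, rfl⟩
      exact key e he
  · rintro ⟨z, hz⟩
    have hmem : ∀ e : Fin k → H, Orthonormal ℂ e →
        ∑ j, (c j : ℂ) * ⟪e j, A (e j)⟫ = z := by
      intro e he
      have : (∑ j, (c j : ℂ) * ⟪e j, A (e j)⟫) ∈ cNumRange k c A := ⟨e, he, rfl⟩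
      rwa [hz, Set.mem_singleton_iff] at this
    -- the pair lemma
    have hpair : ∀ u w : H, ‖u‖ = 1 → ‖w‖ = 1 → ⟪u, w⟫ = 0 →
        ⟪u, A u⟫ = ⟪w, A w⟫ := by
      intro u w hu hw huw
      obtain ⟨i0, j0, hc0⟩ := hc
      have hij : i0 ≠ j0 := fun h => hc0 (by rw [h])
      have hk2 : 2 ≤ k := by
        have h1 := i0.2; have h2 := j0.2
        have h3 : (i0 : ℕ) ≠ (j0 : ℕ) := Fin.val_ne_of_ne hij
        omega
      have hON : Orthonormal ℂ ![u, w] := by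
        rw [orthonormal_iff_ite]
        intro a b
        have huu : ⟪u, u⟫ = 1 := by
          rw [inner_self_eq_norm_sq_to_K, hu]; norm_num
        have hww : ⟪w, w⟫ = 1 := by
          rw [inner_self_eq_norm_sq_to_K, hw]; norm_num
        have hwu : ⟪w, u⟫ = 0 := by rwa [← inner_eq_zero_symm]
        fin_cases a <;> fin_cases b <;> simp [huu, hww, huw, hwu, hu, hw]
      obtain ⟨g, hg, hgi⟩ :=
        exists_orthonormal_extension' k hk (k - 2) 2 (by omega) ![u, w] hON
      set p0 : Fin k := Fin.castLE (Nat.le.intro (by omega : 2 + (k-2) = k)) 0 with hp0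
      set p1 : Fin k := Fin.castLE (Nat.le.intro (by omega : 2 + (k-2) = k)) 1 with hp1
      have hgp0 : g p0 = u := by simpa using hgi 0
      have hgp1 : g p1 = w := by simpa using hgi 1
      have hp01 : p0 ≠ p1 := by simp [hp0, hp1, Fin.ext_iff]
      -- a permutation τ with τ i0 = p0, τ j0 = p1
      set σ1 := Equiv.swap i0 p0 with hσ1
      have hj0' : σ1 j0 ≠ p0 := by
        intro h
        exact hij (σ1.injective (by rw [h, hσ1, Equiv.swap_apply_left]))
      set σ2 := Equiv.swap (σ1 j0) p1 with hσ2
      set τ := σ1.trans σ2 with hτ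
      have hτi0 : τ i0 = p0 := by
        rw [hτ, Equiv.trans_apply, hσ1, Equiv.swap_apply_left, hσ2,
          Equiv.swap_apply_of_ne_of_ne (Ne.symm hj0') hp01]
      have hτj0 : τ j0 = p1 := by
        rw [hτ, Equiv.trans_apply, hσ2, Equiv.swap_apply_left]
      set E : Fin k → H := g ∘ τ with hE
      have hEon : Orthonormal ℂ E := hg.comp τ τ.injective
      have hEi0 : E i0 = u := by rw [hE, Function.comp_apply, hτi0, hgp0]
      have hEj0 : E j0 = w := by rw [hE, Function.comp_apply, hτj0, hgp1]
      set σ := Equiv.swap i0 j0 with hσ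
      set F : Fin k → ℂ := fun j => ⟪E j, A (E j)⟫ with hF
      have h1 : ∑ j, (c j : ℂ) * F j = z := hmem E hEon
      have h2 : ∑ j, (c j : ℂ) * F (σ j) = z :=
        hmem (E ∘ σ) (hEon.comp σ σ.injective)
      have h3 : ∑ j, ((c (σ j) : ℂ)) * F (σ j) = z := by
        rw [Equiv.sum_comp σ (fun j => (c j : ℂ) * F j)]
        exact h1
      have h4 : ∑ j, ((c j : ℂ) - (c (σ j) : ℂ)) * F (σ j) = 0 := by
        simp only [sub_mul]
        rw [Finset.sum_sub_distrib, h2, h3, sub_self]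
      have h5 : ∑ j, ((c j : ℂ) - (c (σ j) : ℂ)) * F (σ j)
          = ((c i0 : ℂ) - (c j0 : ℂ)) * F j0 + ((c j0 : ℂ) - (c i0 : ℂ)) * F i0 := by
        rw [← Finset.sum_subset (Finset.subset_univ ({i0, j0} : Finset (Fin k)))]
        · rw [Finset.sum_pair hij, hσ, Equiv.swap_apply_left, Equiv.swap_apply_right]
        · intro x _ hx
          simp only [Finset.mem_insert, Finset.mem_singleton, not_or] at hx
          rw [hσ, Equiv.swap_apply_of_ne_of_ne hx.1 hx.2, sub_self, zero_mul]
      have h6 : ((c i0 : ℂ) - (c j0 : ℂ)) * (F j0 - F i0) = 0 := by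
        rw [h5] at h4
        linear_combination h4
      have hcc : ((c i0 : ℂ) - (c j0 : ℂ)) ≠ 0 := by
        intro h
        exact hc0 (by exact_mod_cast sub_eq_zero.mp h)
      have h7 : F j0 = F i0 := by
        rcases mul_eq_zero.mp h6 with h | h
        · exact absurd h hcc
        · exact sub_eq_zero.mp h
      rw [hF] at h7
      simp only at h7
      rw [← hEi0, ← hEj0, h7]
    -- the sphere lemma
    have hsphere : ∀ u w : H, ‖u‖ = 1 → ‖w‖ = 1 → ⟪u, A u⟫ = ⟪w, A w⟫ := by
      intro u w hu hw
      have huu : ⟪u, u⟫ = 1 := by rw [inner_self_eq_norm_sq_to_K, hu]; norm_num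
      set a : ℂ := ⟪u, w⟫ with ha
      set w0 : H := w - a • u with hw0
      by_cases h0 : w0 = 0
      · -- w is a multiple of u
        have hwa : w = a • u := by
          have := sub_eq_zero.mp h0
          rw [this]
        have hna : ‖a‖ = 1 := by
          have h := hw
          rw [hwa, norm_smul, hu, mul_one] at h
          exact h
        have hconj : (starRingEnd ℂ) a * a = 1 := by
          rw [RCLike.conj_mul, hna]
          norm_num
        rw [hwa]
        rw [map_smul, inner_smul_left, inner_smul_right, ← mul_assoc, hconj, one_mul]
      · set r : ℝ := ‖w0‖ with hr
        have hr0 : r ≠ 0 := norm_ne_zero_iff.mpr h0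
        set bC : ℂ := (r : ℂ) with hbC
        have hb0 : bC ≠ 0 := by
          rw [hbC]
          exact_mod_cast hr0
        set wn : H := bC⁻¹ • w0 with hwn
        have hwn1 : ‖wn‖ = 1 := by
          rw [hwn, norm_smul, norm_inv, hbC, Complex.norm_real, Real.norm_eq_abs,
            abs_of_nonneg (hr ▸ norm_nonneg w0), hr,
            inv_mul_cancel₀ (norm_ne_zero_iff.mpr h0)]
        have hun : ⟪u, wn⟫ = 0 := by
          rw [hwn, inner_smul_right, hw0, inner_sub_right, inner_smul_right, huu, ← ha]
          ring
        have hnu : ⟪wn, u⟫ = 0 := by rwa [inner_eq_zero_symm] at hun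
        have hnn : ⟪wn, wn⟫ = 1 := by rw [inner_self_eq_norm_sq_to_K, hwn1]; norm_num
        have hweq : w = a • u + bC • wn := by
          rw [hwn, smul_smul, mul_inv_cancel₀ hb0, one_smul, hw0]
          abel
        have hsum1 : (starRingEnd ℂ) a * a + (starRingEnd ℂ) bC * bC = 1 := by
          have h2 : ⟪w, w⟫ = (starRingEnd ℂ) a * a + (starRingEnd ℂ) bC * bC := by
            conv_lhs => rw [hweq]
            simp only [inner_add_left, inner_add_right, inner_smul_left, inner_smul_right,
              huu, hnn, hun, hnu]
            ring
          have h3 : ⟪w, w⟫ = 1 := by rw [inner_self_eq_norm_sq_to_K, hw]; norm_num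
          rw [← h2, h3]
        set w' : H := (starRingEnd ℂ) bC • u - (starRingEnd ℂ) a • wn with hw'
        have hw'w' : ⟪w', w'⟫ = 1 := by
          rw [hw']
          simp only [inner_sub_left, inner_sub_right, inner_smul_left, inner_smul_right,
            huu, hnn, hun, hnu, Complex.conj_conj]
          linear_combination hsum1
        have hw'n : ‖w'‖ = 1 := by
          have h5 : ‖w'‖ * ‖w'‖ = 1 := by
            have h4 : RCLike.re (⟪w', w'⟫) = (1 : ℝ) := by rw [hw'w']; simp
            rw [inner_self_eq_norm_mul_norm] at h4
            exact h4
          nlinarith [norm_nonneg w']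
        have hww' : ⟪w, w'⟫ = 0 := by
          conv_lhs => rw [hweq, hw']
          simp only [inner_add_left, inner_sub_right, inner_smul_left, inner_smul_right,
            huu, hnn, hun, hnu, Complex.conj_conj]
          ring
        have e1 : ⟪w, A w⟫ = ⟪w', A w'⟫ := hpair w w' hw hw'n hww'
        have e2 : ⟪u, A u⟫ = ⟪wn, A wn⟫ := hpair u wn hu hwn1 hun
        have hfw : ⟪w, A w⟫ = (starRingEnd ℂ) a * a * ⟪u, A u⟫
            + (starRingEnd ℂ) a * bC * ⟪u, A wn⟫ + (starRingEnd ℂ) bC * a * ⟪wn, A u⟫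
            + (starRingEnd ℂ) bC * bC * ⟪wn, A wn⟫ := by
          conv_lhs => rw [hweq]
          simp only [map_add, map_smul, inner_add_left, inner_add_right,
            inner_smul_left, inner_smul_right]
          ring
        have hfw' : ⟪w', A w'⟫ = bC * (starRingEnd ℂ) bC * ⟪u, A u⟫
            - bC * (starRingEnd ℂ) a * ⟪u, A wn⟫ - a * (starRingEnd ℂ) bC * ⟪wn, A u⟫
            + a * (starRingEnd ℂ) a * ⟪wn, A wn⟫ := by
          rw [hw']
          simp only [map_sub, map_smul, inner_sub_left, inner_sub_right,
            inner_smul_left, inner_smul_right, Complex.conj_conj]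
          ring
        linear_combination (e2 - e1 - hfw - hfw'
          - (⟪u, A u⟫ + ⟪wn, A wn⟫) * hsum1) / 2
    -- conclusion
    obtain ⟨e0, he0⟩ := hex
    set u0 : H := e0 ⟨0, hk1⟩ with hu0
    have hu0n : ‖u0‖ = 1 := he0.1 _
    have hquad : ∀ x : H, ⟪x, A x⟫ = ⟪u0, A u0⟫ * ⟪x, x⟫ := by
      intro x
      by_cases hx : x = 0
      · simp [hx]
      · have hxn : ‖x‖ ≠ 0 := norm_ne_zero_iff.mpr hx
        set xu : H := ((‖x‖ : ℂ))⁻¹ • x with hxu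
        have hxu1 : ‖xu‖ = 1 := by
          rw [hxu, norm_smul, norm_inv, Complex.norm_real, Real.norm_eq_abs,
            abs_of_nonneg (norm_nonneg x), inv_mul_cancel₀ hxn]
        have hconst : ⟪xu, A xu⟫ = ⟪u0, A u0⟫ := hsphere xu u0 hxu1 hu0n
        have h1 : ⟪xu, xu⟫ = 1 := by rw [inner_self_eq_norm_sq_to_K, hxu1]; norm_num
        have hxeq : x = ((‖x‖ : ℂ)) • xu := by
          rw [hxu, smul_smul, mul_inv_cancel₀ (by exact_mod_cast hxn), one_smul]
        conv_lhs => rw [hxeq]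
        conv_rhs => rw [hxeq]
        simp only [map_smul, inner_smul_left, inner_smul_right, h1, mul_one, hconst]
        ring
    refine ⟨⟪u0, A u0⟫, ?_⟩
    have hB : ∀ x : H, ⟪(A - ⟪u0, A u0⟫ • (1 : H →L[ℂ] H)) x, x⟫ = 0 := by
      intro x
      have h := hquad x
      have h2 : ⟪A x, x⟫ = (starRingEnd ℂ) (⟪u0, A u0⟫) * ⟪x, x⟫ := by
        rw [← inner_conj_symm (A x) x, h, map_mul, inner_self_conj]
      simp only [ContinuousLinearMap.sub_apply, ContinuousLinearMap.smul_apply,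
        ContinuousLinearMap.one_apply, inner_sub_left, inner_smul_left, h2]
      ring
    have hT : ((A - ⟪u0, A u0⟫ • (1 : H →L[ℂ] H)) : H →ₗ[ℂ] H) = 0 :=
      (inner_map_self_eq_zero _).mp hB
    ext x
    have hx := LinearMap.ext_iff.mp hT x
    simp only [LinearMap.sub_apply, LinearMap.smul_apply, Module.End.one_apply,
      LinearMap.zero_apply, ContinuousLinearMap.coe_coe] at hx
    simp only [ContinuousLinearMap.smul_apply, ContinuousLinearMap.one_apply]
    exact sub_eq_zero.mp hx
end

section
/- Let c = (c_1,...,c_k) ∈ ℝ^k with not all c_i equal. The c-numerical radius r_c(A) = sup{ |λ| : λ ∈ W_c(A) } defines a norm on the space of bounded operators on H (equivalently on M_n(ℂ) when dim H = n < ∞) if and only if Σ_{j=1}^k c_j ≠ 0. -/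
open scoped Pointwise

noncomputable def cNumRadius {H : Type*} [NormedAddCommGroup H] [InnerProductSpace ℂ H]
    (k : ℕ) (c : Fin k → ℝ) (A : H →L[ℂ] H) : ℝ :=
  sSup ((fun z => ‖z‖) '' cNumRange k c A)

local notation "⟪" x ", " y "⟫" => @inner ℂ _ _ x y


lemma auxPerp {H : Type*} [NormedAddCommGroup H] [InnerProductSpace ℂ H]
    {m : ℕ} (v : Fin m → H)
    (hm : (m : Cardinal) < Module.rank ℂ H) :
    ∃ u : H, ‖u‖ = 1 ∧ ∀ i, inner ℂ (v i) u = (0 : ℂ) := by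
  set K := Submodule.span ℂ (Set.range v) with hK
  have hfd : FiniteDimensional ℂ K := FiniteDimensional.span_of_finite ℂ (Set.finite_range v)
  have hne : Kᗮ ≠ ⊥ := by
    intro hbot
    have htop : K = ⊤ := Submodule.orthogonal_eq_bot_iff.mp hbot
    have : Module.rank ℂ H ≤ m := by
      have h1 : Module.rank ℂ K ≤ (m : Cardinal) :=
        (rank_span_le (Set.range v)).trans (by simpa using Cardinal.mk_range_le_lift (f := v))
      have h2 : Module.rank ℂ (⊤ : Submodule ℂ H) = Module.rank ℂ H := rank_top ℂ H
      rw [htop] at h1; rw [h2] at h1; exact h1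
    exact absurd hm (not_lt.mpr this)
  obtain ⟨u0, hu0, hu0ne⟩ := Submodule.exists_mem_ne_zero_of_ne_bot hne
  refine ⟨((‖u0‖⁻¹ : ℝ) : ℂ) • u0, ?_, ?_⟩
  · simp [norm_smul, inv_mul_cancel₀ (norm_ne_zero_iff.mpr hu0ne)]
  · intro i
    rw [inner_smul_right]
    have : inner ℂ (v i) u0 = (0 : ℂ) :=
      (Submodule.mem_orthogonal K u0).mp hu0 _ (Submodule.subset_span ⟨i, rfl⟩)
    rw [this, mul_zero]

lemma auxExtend {H : Type*} [NormedAddCommGroup H] [InnerProductSpace ℂ H]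
    (k : ℕ) (hk : (k : Cardinal) ≤ Module.rank ℂ H) (u : H) (hu : ‖u‖ = 1) :
    ∀ m : ℕ, m ≤ k → ∃ e : Fin m → H, Orthonormal ℂ e ∧ ∀ h : 0 < m, e ⟨0, h⟩ = u := by
  intro m
  induction m with
  | zero => exact fun _ => ⟨Fin.elim0, orthonormal_iff_ite.mpr (fun i => i.elim0), fun h => absurd h (lt_irrefl 0)⟩
  | succ m ih =>
    intro hmk
    rcases Nat.eq_zero_or_pos m with hm0 | hm0
    · subst hm0
      refine ⟨fun _ => u, ?_, fun _ => rfl⟩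
      rw [orthonormal_iff_ite]
      intro i j
      have : i = j := by omega
      simp [this, inner_self_eq_norm_sq_to_K, hu]
    · obtain ⟨e, he, he0⟩ := ih (le_of_lt hmk)
      have hmk' : (m : Cardinal) < (k : Cardinal) := by
        exact_mod_cast Nat.lt_of_lt_of_le (Nat.lt_succ_self m) hmk
      have hrank : (m : Cardinal) < Module.rank ℂ H := lt_of_lt_of_le hmk' hk
      obtain ⟨u', hu', hperp⟩ := auxPerp e hrank
      refine ⟨Fin.snoc e u', ?_, ?_⟩
      · rw [orthonormal_iff_ite]
        intro i j
        refine Fin.lastCases ?_ ?_ i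
        · refine Fin.lastCases ?_ ?_ j
          · simp [Fin.snoc_last, inner_self_eq_norm_sq_to_K, hu']
          · intro q
            simp only [Fin.snoc_last, Fin.snoc_castSucc]
            rw [← inner_conj_symm, hperp q]
            simp [(Fin.castSucc_lt_last q).ne']
        · intro p
          refine Fin.lastCases ?_ ?_ j
          · simp [Fin.snoc_last, Fin.snoc_castSucc, hperp p, (Fin.castSucc_lt_last p).ne]
          · intro q
            simp only [Fin.snoc_castSucc]
            rw [orthonormal_iff_ite] at he
            rw [he p q]
            simp [Fin.castSucc_inj]
      · intro h
        have h0 : (⟨0, h⟩ : Fin (m + 1)) = Fin.castSucc ⟨0, hm0⟩ := by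
          apply Fin.ext; rfl
        rw [h0, Fin.snoc_castSucc]
        exact he0 hm0

lemma csSup_mul_nonneg {r : ℝ} (hr : 0 ≤ r) {S : Set ℝ} (hS : S.Nonempty) (hB : BddAbove S)
    (h0 : 0 ≤ sSup S) : sSup ((fun x => r * x) '' S) = r * sSup S := by
  rcases eq_or_lt_of_le hr with h | h
  · rw [← h]
    simp only [zero_mul]
    rw [show (fun x : ℝ => (0 : ℝ)) '' S = {0} from hS.image_const 0, csSup_singleton]
  · obtain ⟨M, hM⟩ := hB
    have hBim : BddAbove ((fun x => r * x) '' S) := by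
      refine ⟨r * M, ?_⟩
      rintro y ⟨x, hx, rfl⟩
      exact mul_le_mul_of_nonneg_left (hM hx) hr
    apply le_antisymm
    · apply csSup_le (hS.image _)
      rintro y ⟨x, hx, rfl⟩
      exact mul_le_mul_of_nonneg_left (le_csSup ⟨M, hM⟩ hx) hr
    · rw [mul_comm, ← le_div_iff₀ h]
      apply csSup_le hS
      intro x hx
      rw [le_div_iff₀ h, mul_comm]
      exact le_csSup hBim ⟨x, hx, rfl⟩


section MainAux
variable {H : Type*} [NormedAddCommGroup H] [InnerProductSpace ℂ H]

lemma cnr_bdd (k : ℕ) (c : Fin k → ℝ) (A : H →L[ℂ] H) :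
    BddAbove ((fun z => ‖z‖) '' cNumRange k c A) := by
  refine ⟨∑ j, |c j| * ‖A‖, ?_⟩
  rintro y ⟨z, ⟨e, he, rfl⟩, rfl⟩
  calc ‖∑ j, (c j : ℂ) * (inner ℂ (e j) (A (e j)) : ℂ)‖
      ≤ ∑ j, ‖(c j : ℂ) * (inner ℂ (e j) (A (e j)) : ℂ)‖ := by
        exact
          norm_sum_le Finset.univ (fun j => (c j : ℂ) * (inner ℂ (e j) (A (e j)) : ℂ))
    _ ≤ ∑ j, |c j| * ‖A‖ := by
        apply Finset.sum_le_sum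
        intro j _
        rw [norm_mul, Complex.norm_real, Real.norm_eq_abs]
        apply mul_le_mul_of_nonneg_left _ (abs_nonneg _)
        have h1 : ‖inner ℂ (e j) (A (e j))‖ ≤ ‖e j‖ * ‖A (e j)‖ := by
          simpa using norm_inner_le_norm (𝕜 := ℂ) (e j) (A (e j))
        have h2 : ‖A (e j)‖ ≤ ‖A‖ * ‖e j‖ := A.le_opNorm (e j)
        rw [he.1 j] at h1 h2
        simpa using h1.trans (by simpa using h2)

lemma cnr_nonempty (k : ℕ) (hk2 : 2 ≤ k) (hk : (k : Cardinal) ≤ Module.rank ℂ H)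
    (c : Fin k → ℝ) (A : H →L[ℂ] H) : (cNumRange k c A).Nonempty := by
  have hnt : Nontrivial H := by
    rw [← rank_pos_iff_nontrivial (R := ℂ)]
    refine lt_of_lt_of_le ?_ hk
    exact_mod_cast Nat.lt_of_lt_of_le (by norm_num) hk2
  obtain ⟨x, hx⟩ := exists_ne (0 : H)
  have hu : ‖((‖x‖⁻¹ : ℝ) : ℂ) • x‖ = 1 := by
    simp [norm_smul, inv_mul_cancel₀ (norm_ne_zero_iff.mpr hx)]
  obtain ⟨e, he, -⟩ := auxExtend k hk _ hu k le_rfl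
  exact ⟨_, e, he, rfl⟩

lemma cnr_key (k : ℕ) (hk2 : 2 ≤ k) (hk : (k : Cardinal) ≤ Module.rank ℂ H)
    (c : Fin k → ℝ) (A : H →L[ℂ] H) (hA : ∀ z ∈ cNumRange k c A, z = 0) :
    cNumRadius k c A = 0 := by
  have him : (fun z => ‖z‖) '' cNumRange k c A = {0} := by
    ext y
    constructor
    · rintro ⟨z, hz, rfl⟩
      simp [hA z hz]
    · intro hy
      rw [Set.mem_singleton_iff] at hy
      subst hy
      obtain ⟨z, hz⟩ := cnr_nonempty k hk2 hk c A
      exact ⟨z, hz, by simp [hA z hz]⟩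
  rw [cNumRadius, him, csSup_singleton]

end MainAux

theorem stmt6 {H : Type*} [NormedAddCommGroup H] [InnerProductSpace ℂ H]
    (k : ℕ) (hk2 : 2 ≤ k) (c : Fin k → ℝ) (hk : (k : Cardinal) ≤ Module.rank ℂ H)
    (hc : ∃ i j, c i ≠ c j) :
    ((∀ A : H →L[ℂ] H, cNumRadius k c A = 0 ↔ A = 0) ∧
      (∀ A B : H →L[ℂ] H, cNumRadius k c (A + B) ≤ cNumRadius k c A + cNumRadius k c B) ∧
      (∀ (t : ℂ) (A : H →L[ℂ] H), cNumRadius k c (t • A) = ‖t‖ * cNumRadius k c A)) ↔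
      (∑ j, c j) ≠ 0 := by
  have hne : ∀ A : H →L[ℂ] H, ((fun z => ‖z‖) '' cNumRange k c A).Nonempty :=
    fun A => (cnr_nonempty k hk2 hk c A).image _
  have hnt : Nontrivial H := by
    rw [← rank_pos_iff_nontrivial (R := ℂ)]
    refine lt_of_lt_of_le ?_ hk
    exact_mod_cast Nat.lt_of_lt_of_le (by norm_num) hk2
  constructor
  · rintro ⟨hdef, -, -⟩ hsum
    have hid : cNumRadius k c (1 : H →L[ℂ] H) = 0 := by
      apply cnr_key k hk2 hk
      rintro z ⟨e, he, rfl⟩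
      have h1 : ∀ j, (inner ℂ (e j) ((1 : H →L[ℂ] H) (e j)) : ℂ) = 1 := by
        intro j
        have := orthonormal_iff_ite.mp he j j
        simpa using this
      simp only [h1, mul_one]
      rw [← Complex.ofReal_sum, hsum]
      simp
    have h10 : (1 : H →L[ℂ] H) = 0 := (hdef 1).mp hid
    obtain ⟨x, hx⟩ := exists_ne (0 : H)
    have := congrArg (fun T : H →L[ℂ] H => T x) h10
    simp at this
    exact hx this
  · intro hsum
    refine ⟨?_, ?_, ?_⟩
    · -- definiteness
      intro A
      constructor
      · intro hrad
        have hz : ∀ z ∈ cNumRange k c A, z = 0 := by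
          intro z hz
          have h1 : ‖z‖ ≤ 0 := by
            rw [← hrad]
            exact le_csSup (cnr_bdd k c A) ⟨z, hz, rfl⟩
          exact norm_eq_zero.mp (le_antisymm h1 (norm_nonneg z))
        have hquad : ∀ u : H, ‖u‖ = 1 → ⟪u, A u⟫ = 0 := by
          intro u hu
          obtain ⟨e, he, he0⟩ := auxExtend k hk u hu k le_rfl
          set a : Fin k → ℂ := fun i => ⟪e i, A (e i)⟫ with ha
          have hall : ∀ σ : Equiv.Perm (Fin k), ∑ j, (c j : ℂ) * a (σ j) = 0 := by
            intro σ
            exact hz _ ⟨e ∘ σ, he.comp σ σ.injective, rfl⟩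
          obtain ⟨i0, j0, hci⟩ := hc
          have hij : i0 ≠ j0 := fun h => hci (by rw [h])
          have hdiff : ∀ σ : Equiv.Perm (Fin k),
              ((c i0 : ℂ) - (c j0 : ℂ)) * (a (σ i0) - a (σ j0)) = 0 := by
            intro σ
            have h1 := hall σ
            have h2 := hall ((Equiv.swap i0 j0).trans σ)
            have h3 : ∑ j, ((c j : ℂ) * a (σ j) - (c j : ℂ) * a (σ (Equiv.swap i0 j0 j))) = 0 := by
              rw [Finset.sum_sub_distrib]
              simp only [Equiv.trans_apply] at h2
              rw [h1, h2, sub_zero]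
            have h4 : ∑ j ∈ ({i0, j0} : Finset (Fin k)),
                ((c j : ℂ) * a (σ j) - (c j : ℂ) * a (σ (Equiv.swap i0 j0 j))) = 0 := by
              rw [← h3]
              apply Finset.sum_subset (Finset.subset_univ _)
              intro x _ hx
              simp only [Finset.mem_insert, Finset.mem_singleton, not_or] at hx
              rw [Equiv.swap_apply_of_ne_of_ne hx.1 hx.2, sub_self]
            rw [Finset.sum_pair hij, Equiv.swap_apply_left, Equiv.swap_apply_right] at h4
            linear_combination h4
          have hcc : ((c i0 : ℂ) - (c j0 : ℂ)) ≠ 0 := by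
            rw [sub_ne_zero]
            exact_mod_cast hci
          have heq : ∀ p q : Fin k, a p = a q := by
            intro p q
            rcases eq_or_ne p q with rfl | hpq
            · rfl
            · set σ1 := Equiv.swap i0 p with hσ1
              set j1 := σ1 j0 with hj1
              have hj1p : j1 ≠ p := by
                intro h
                have : σ1 i0 = p := Equiv.swap_apply_left i0 p
                exact hij (σ1.injective (by rw [this, ← h]))
              have hσ : (σ1.trans (Equiv.swap j1 q)) i0 = p ∧
                  (σ1.trans (Equiv.swap j1 q)) j0 = q := by
                constructor
                · simp only [Equiv.trans_apply, hσ1, Equiv.swap_apply_left]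
                  exact Equiv.swap_apply_of_ne_of_ne (Ne.symm hj1p) hpq
                · simp only [Equiv.trans_apply, ← hj1]
                  exact Equiv.swap_apply_left j1 q
              have := hdiff (σ1.trans (Equiv.swap j1 q))
              rw [hσ.1, hσ.2] at this
              rcases mul_eq_zero.mp this with h | h
              · exact absurd h hcc
              · exact sub_eq_zero.mp h
          have h0k : 0 < k := by omega
          have hsum0 := hall (Equiv.refl _)
          simp only [Equiv.refl_apply] at hsum0
          have hfac : ∑ j, (c j : ℂ) * a j = ((∑ j, c j : ℝ) : ℂ) * a ⟨0, h0k⟩ := by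
            push_cast
            rw [Finset.sum_mul]
            exact Finset.sum_congr rfl fun j _ => by rw [heq j ⟨0, h0k⟩]
          rw [hfac] at hsum0
          have ha0 : a ⟨0, h0k⟩ = 0 := by
            rcases mul_eq_zero.mp hsum0 with h | h
            · exact absurd h (by exact_mod_cast hsum)
            · exact h
          rw [← he0 h0k]
          exact ha0
        have hx : ∀ x : H, ⟪x, A x⟫ = 0 := by
          intro x
          rcases eq_or_ne x 0 with rfl | hx0
          · simp
          · have hr : ((‖x‖⁻¹ : ℝ) : ℂ) ≠ 0 := by
              simp [norm_ne_zero_iff.mpr hx0]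
            have hu : ‖((‖x‖⁻¹ : ℝ) : ℂ) • x‖ = 1 := by
              simp [norm_smul, inv_mul_cancel₀ (norm_ne_zero_iff.mpr hx0)]
            have h := hquad _ hu
            rw [inner_smul_left, map_smul, inner_smul_right, Complex.conj_ofReal] at h
            rcases mul_eq_zero.mp h with h' | h'
            · exact absurd h' hr
            · rcases mul_eq_zero.mp h' with h'' | h''
              · exact absurd h'' hr
              · exact h''
        have hlin : (A : H →ₗ[ℂ] H) = 0 := by
          rw [← inner_map_self_eq_zero]
          intro x
          rw [ContinuousLinearMap.coe_coe, ← inner_conj_symm, hx x, map_zero]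
        apply ContinuousLinearMap.coe_injective
        rw [hlin, ContinuousLinearMap.coe_zero]
      · rintro rfl
        apply cnr_key k hk2 hk
        rintro z ⟨e, he, rfl⟩
        simp
    · -- triangle inequality
      intro A B
      apply csSup_le (hne (A + B))
      rintro y ⟨z, ⟨e, he, rfl⟩, rfl⟩
      have hsplit : ∑ j, (c j : ℂ) * (inner ℂ (e j) ((A + B) (e j)) : ℂ) =
          (∑ j, (c j : ℂ) * (inner ℂ (e j) (A (e j)) : ℂ)) +
            ∑ j, (c j : ℂ) * (inner ℂ (e j) (B (e j)) : ℂ) := by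
        rw [← Finset.sum_add_distrib]
        exact Finset.sum_congr rfl fun j _ => by
          rw [ContinuousLinearMap.add_apply, inner_add_right, mul_add]
      rw [hsplit]
      calc ‖_ + _‖ ≤ ‖_‖ + ‖_‖ := norm_add_le _ _
        _ ≤ cNumRadius k c A + cNumRadius k c B :=
            add_le_add (le_csSup (cnr_bdd k c A) ⟨_, ⟨e, he, rfl⟩, rfl⟩)
              (le_csSup (cnr_bdd k c B) ⟨_, ⟨e, he, rfl⟩, rfl⟩)
    · -- homogeneity
      intro t A
      have hts : ∀ e : Fin k → H, ∑ j, (c j : ℂ) * (inner ℂ (e j) ((t • A) (e j)) : ℂ) =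
          t * ∑ j, (c j : ℂ) * (inner ℂ (e j) (A (e j)) : ℂ) := by
        intro e
        rw [Finset.mul_sum]
        exact Finset.sum_congr rfl fun j _ => by
          rw [ContinuousLinearMap.smul_apply, inner_smul_right]; ring
      have him : (fun z => ‖z‖) '' cNumRange k c (t • A) =
          (fun x => ‖t‖ * x) '' ((fun z => ‖z‖) '' cNumRange k c A) := by
        ext y
        constructor
        · rintro ⟨z, ⟨e, he, rfl⟩, rfl⟩
          refine ⟨‖∑ j, (c j : ℂ) * (inner ℂ (e j) (A (e j)) : ℂ)‖,
            ⟨_, ⟨e, he, rfl⟩, rfl⟩, ?_⟩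
          beta_reduce
          rw [hts e, norm_mul]
        · rintro ⟨x, ⟨z, ⟨e, he, rfl⟩, rfl⟩, rfl⟩
          refine ⟨_, ⟨e, he, rfl⟩, ?_⟩
          beta_reduce
          rw [hts e, norm_mul]
      rw [cNumRadius, him, csSup_mul_nonneg (norm_nonneg t) (hne A) (cnr_bdd k c A)
        (Real.sSup_nonneg (by rintro y ⟨z, hz, rfl⟩; exact norm_nonneg z))]
      rfl
end

section
/- Let S be a hermitian n×n complex matrix with eigenvalues λ_1(S) ≥ ... ≥ λ_n(S) (counted with multiplicity), and let c = (c_1,...,c_n) ∈ ℝ^n with c_1 ≥ ... ≥ c_n. Then the c-numerical range of S equals the closed real interval [ Σ_{j=1}^n c_j λ_{n+1-j}(S), Σ_{j=1}^n c_j λ_j(S) ]. -/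
open scoped Pointwise

namespace CNRmain


variable {n : ℕ}

private lemma monovary_aux {c μ : Fin n → ℝ} (hc : Antitone c) (hμ : Antitone μ) :
    Monovary c μ := fun i j h => by
  rcases le_total i j with hij | hij
  · exact absurd (hμ hij) (not_le.2 h)
  · exact hc hij

private lemma sum_perm_le {c μ : Fin n → ℝ} (hc : Antitone c) (hμ : Antitone μ)
    (τ : Equiv.Perm (Fin n)) : ∑ j, c j * μ (τ j) ≤ ∑ j, c j * μ j :=
  (monovary_aux hc hμ).sum_mul_comp_perm_le_sum_mul (σ := τ)

private lemma le_sum_perm {c μ : Fin n → ℝ} (hc : Antitone c) (hμ : Antitone μ)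
    (τ : Equiv.Perm (Fin n)) : ∑ j, c j * μ j.rev ≤ ∑ j, c j * μ (τ j) := by
  have hA : Antivary c (fun j => μ j.rev) := by
    intro i j h
    rcases le_total i j with hij | hij
    · exact hc hij
    · exact absurd (hμ (Fin.rev_le_rev.2 hij)) (not_le.2 h)
  have := hA.sum_mul_le_sum_mul_comp_perm (σ := Fin.revPerm * τ)
  simpa [Fin.rev_rev] using this

private lemma ds_bound {c μ : Fin n → ℝ} (hc : Antitone c) (hμ : Antitone μ)
    {D : Matrix (Fin n) (Fin n) ℝ} (hD : D ∈ doublyStochastic ℝ (Fin n)) :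
    ∑ j, ∑ i, (c j * μ i) * D i j ∈ Set.Icc (∑ j, c j * μ j.rev) (∑ j, c j * μ j) := by
  obtain ⟨w, hw0, hw1, hwD⟩ := exists_eq_sum_perm_of_mem_doublyStochastic hD
  have hb : ∀ τ : Equiv.Perm (Fin n),
      ∑ i, c (τ i) * μ i ∈ Set.Icc (∑ j, c j * μ j.rev) (∑ j, c j * μ j) := by
    intro τ
    have hre : ∑ i, c (τ i) * μ i = ∑ i, c i * μ (τ⁻¹ i) := by
      rw [← Equiv.sum_comp τ (fun i => c i * μ (τ⁻¹ i))]
      simp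
    rw [hre]
    exact ⟨le_sum_perm hc hμ τ⁻¹, sum_perm_le hc hμ τ⁻¹⟩
  have hval : ∑ j, ∑ i, (c j * μ i) * D i j
      = ∑ τ : Equiv.Perm (Fin n), w τ * ∑ i, c (τ i) * μ i := by
    have hent : ∀ i j, D i j = ∑ τ : Equiv.Perm (Fin n), w τ * if τ i = j then 1 else 0 := by
      intro i j
      rw [← hwD]
      simp [Matrix.sum_apply, Equiv.Perm.permMatrix, PEquiv.toMatrix_apply,
        Equiv.toPEquiv_apply, Option.mem_def, eq_comm]
    calc ∑ j, ∑ i, (c j * μ i) * D i j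
        = ∑ j, ∑ i, ∑ τ : Equiv.Perm (Fin n),
            (if τ i = j then (c j * μ i) * w τ else 0) := by
          refine Finset.sum_congr rfl fun j _ => Finset.sum_congr rfl fun i _ => ?_
          rw [hent i j, Finset.mul_sum]
          refine Finset.sum_congr rfl fun τ _ => ?_
          by_cases h : τ i = j <;> simp [h, mul_comm]
      _ = ∑ τ : Equiv.Perm (Fin n), ∑ j, ∑ i,
            (if τ i = j then (c j * μ i) * w τ else 0) :=
          calc ∑ j, ∑ i, ∑ τ : Equiv.Perm (Fin n), (if τ i = j then (c j * μ i) * w τ else 0)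
              = ∑ j, ∑ τ : Equiv.Perm (Fin n), ∑ i, (if τ i = j then (c j * μ i) * w τ else 0) :=
                Finset.sum_congr rfl fun j _ => Finset.sum_comm
            _ = ∑ τ : Equiv.Perm (Fin n), ∑ j, ∑ i, (if τ i = j then (c j * μ i) * w τ else 0) :=
                Finset.sum_comm
      _ = ∑ τ : Equiv.Perm (Fin n), ∑ i, ∑ j,
            (if τ i = j then (c j * μ i) * w τ else 0) :=
          Finset.sum_congr rfl fun τ _ => Finset.sum_comm
      _ = ∑ τ : Equiv.Perm (Fin n), w τ * ∑ i, c (τ i) * μ i := by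
          refine Finset.sum_congr rfl fun τ _ => ?_
          rw [Finset.mul_sum]
          refine Finset.sum_congr rfl fun i _ => ?_
          rw [Finset.sum_ite_eq]
          simp [mul_comm, mul_assoc, mul_left_comm]
  rw [hval]
  constructor
  · calc ∑ j, c j * μ j.rev = ∑ τ : Equiv.Perm (Fin n), w τ * ∑ j, c j * μ j.rev := by
          rw [← Finset.sum_mul, hw1, one_mul]
      _ ≤ _ := Finset.sum_le_sum fun τ _ => mul_le_mul_of_nonneg_left (hb τ).1 (hw0 τ)
  · calc ∑ τ : Equiv.Perm (Fin n), w τ * ∑ i, c (τ i) * μ i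
        ≤ ∑ τ : Equiv.Perm (Fin n), w τ * ∑ j, c j * μ j :=
          Finset.sum_le_sum fun τ _ => mul_le_mul_of_nonneg_left (hb τ).2 (hw0 τ)
      _ = _ := by rw [← Finset.sum_mul, hw1, one_mul]



variable {n : ℕ}

private lemma applyV {S : Matrix (Fin n) (Fin n) ℂ} (hS : S.IsHermitian) (j : Fin n) :
    Matrix.toEuclideanCLM (𝕜 := ℂ) S (hS.eigenvectorBasis j) =
      (hS.eigenvalues j : ℂ) • hS.eigenvectorBasis j := by
  ext i
  have h2 := congrFun (hS.mulVec_eigenvectorBasis j) i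
  have h3 := congrFun (Matrix.ofLp_toEuclideanCLM (𝕜 := ℂ) S (hS.eigenvectorBasis j)) i
  refine h3.trans ?_
  rw [h2]
  simp [Complex.real_smul]

private lemma inner_apply_eq {S : Matrix (Fin n) (Fin n) ℂ} (hS : S.IsHermitian)
    (x : EuclideanSpace ℂ (Fin n)) :
    (inner ℂ x (Matrix.toEuclideanCLM (𝕜 := ℂ) S x) : ℂ)
      = ((∑ i, hS.eigenvalues i * ‖(inner ℂ (hS.eigenvectorBasis i) x : ℂ)‖ ^ 2 : ℝ) : ℂ) := by
  set V := hS.eigenvectorBasis with hV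
  have hx : Matrix.toEuclideanCLM (𝕜 := ℂ) S x
      = ∑ i, (inner ℂ (V i) x : ℂ) • ((hS.eigenvalues i : ℂ) • V i) := by
    conv_lhs => rw [← V.sum_repr' x]
    rw [map_sum]
    exact Finset.sum_congr rfl fun i _ => by rw [map_smul, applyV hS i]
  rw [hx, inner_sum]
  push_cast
  refine Finset.sum_congr rfl fun i _ => ?_
  rw [inner_smul_right, inner_smul_right, ← inner_conj_symm x (V i),
    mul_left_comm, RCLike.mul_conj]
  norm_cast
  exact (Complex.ofReal_mul _ _).symm

private lemma parseval (b : OrthonormalBasis (Fin n) ℂ (EuclideanSpace ℂ (Fin n)))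
    (v : EuclideanSpace ℂ (Fin n)) (hv : ‖v‖ = 1) :
    ∑ j, ‖(inner ℂ (b j) v : ℂ)‖ ^ 2 = 1 := by
  have h := b.sum_inner_mul_inner v v
  have h2 : ∀ j, (inner ℂ v (b j) : ℂ) * (inner ℂ (b j) v : ℂ)
      = ((‖(inner ℂ (b j) v : ℂ)‖ ^ 2 : ℝ) : ℂ) := by
    intro j
    rw [← inner_conj_symm (b j) v, RCLike.mul_conj, RCLike.norm_conj]
    norm_num
  rw [Finset.sum_congr rfl fun j _ => h2 j] at h
  rw [← Complex.ofReal_sum] at h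
  have h3 : (inner ℂ v v : ℂ) = ((1 : ℝ) : ℂ) := by
    rw [inner_self_eq_norm_sq_to_K, hv]; norm_num
  rw [h3] at h
  exact_mod_cast h



variable {n : ℕ}



private lemma value_repr (hn : 0 < n) {S : Matrix (Fin n) (Fin n) ℂ} (hS : S.IsHermitian)
    (c : Fin n → ℝ) {e : Fin n → EuclideanSpace ℂ (Fin n)} (he : Orthonormal ℂ e) :
    ∃ D ∈ doublyStochastic ℝ (Fin n),
      ∑ j, (c j : ℂ) * (inner ℂ (e j) (Matrix.toEuclideanCLM (𝕜 := ℂ) S (e j)) : ℂ)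
        = ((∑ j, ∑ i, (c j * hS.eigenvalues i) * D i j : ℝ) : ℂ) := by
  haveI : Nonempty (Fin n) := ⟨⟨0, hn⟩⟩
  set V := hS.eigenvectorBasis with hV
  have hsp : ⊤ ≤ Submodule.span ℂ (Set.range e) :=
    (he.linearIndependent.span_eq_top_of_card_eq_finrank (by simp)).ge
  set B := OrthonormalBasis.mk he hsp with hBdef
  have hB : ∀ j, B j = e j := fun j => congrFun (OrthonormalBasis.coe_mk he hsp) j
  refine ⟨Matrix.of fun i j => ‖(inner ℂ (V i) (e j) : ℂ)‖ ^ 2, ?_, ?_⟩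
  · rw [mem_doublyStochastic_iff_sum]
    refine ⟨fun i j => by simp only [Matrix.of_apply]; positivity, fun i => ?_, fun j => ?_⟩
    · have hflip : ∀ j, ‖(inner ℂ (V i) (e j) : ℂ)‖ = ‖(inner ℂ (B j) (V i) : ℂ)‖ := by
        intro j; rw [hB, ← inner_conj_symm (V i) (e j), RCLike.norm_conj]
      simp only [Matrix.of_apply]
      rw [Finset.sum_congr rfl fun j _ => by rw [hflip j]]
      exact parseval B (V i) (V.orthonormal.1 i)
    · simp only [Matrix.of_apply]
      exact parseval V (e j) (he.1 j)
  · push_cast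
    refine Finset.sum_congr rfl fun j _ => ?_
    rw [inner_apply_eq hS (e j)]
    push_cast
    rw [Finset.mul_sum]
    refine Finset.sum_congr rfl fun i _ => ?_
    simp only [Matrix.of_apply]
    push_cast
    ring


private lemma value_mem_Icc (hn : 0 < n) {S : Matrix (Fin n) (Fin n) ℂ} (hS : S.IsHermitian)
    {c : Fin n → ℝ} (hc : Antitone c) {μ : Fin n → ℝ} (hμa : Antitone μ)
    {σ : Equiv.Perm (Fin n)} (hσ : μ = hS.eigenvalues ∘ σ)
    {e : Fin n → EuclideanSpace ℂ (Fin n)} (he : Orthonormal ℂ e) :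
    ∃ x ∈ Set.Icc (∑ j, c j * μ j.rev) (∑ j, c j * μ j),
      ∑ j, (c j : ℂ) * (inner ℂ (e j) (Matrix.toEuclideanCLM (𝕜 := ℂ) S (e j)) : ℂ) = (x : ℂ) := by
  obtain ⟨D, hD, hval⟩ := value_repr hn hS c he
  rw [mem_doublyStochastic_iff_sum] at hD
  obtain ⟨hD0, hDr, hDc⟩ := hD
  have hD' : (Matrix.of fun k j => D (σ k) j) ∈ doublyStochastic ℝ (Fin n) := by
    rw [mem_doublyStochastic_iff_sum]
    refine ⟨fun i j => hD0 _ _, fun i => hDr _, fun j => ?_⟩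
    simp only [Matrix.of_apply]
    rw [Equiv.sum_comp σ (fun i => D i j)]
    exact hDc j
  have hre : ∑ j, ∑ i, (c j * hS.eigenvalues i) * D i j
      = ∑ j, ∑ k, (c j * μ k) * (Matrix.of fun k j => D (σ k) j) k j := by
    refine Finset.sum_congr rfl fun j _ => ?_
    rw [← Equiv.sum_comp σ (fun i => (c j * hS.eigenvalues i) * D i j)]
    refine Finset.sum_congr rfl fun k _ => ?_
    simp [hσ]
  refine ⟨∑ j, ∑ i, (c j * hS.eigenvalues i) * D i j, ?_, hval⟩
  rw [hre]
  exact ds_bound hc hμa hD'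



variable {n : ℕ}

private noncomputable def rot (e : Fin n → EuclideanSpace ℂ (Fin n)) (a b : Fin n) (t : ℝ) :
    Fin n → EuclideanSpace ℂ (Fin n) := fun j =>
  if j = a then (Real.cos t : ℂ) • e a + (Real.sin t : ℂ) • e b
  else if j = b then ((-Real.sin t : ℝ) : ℂ) • e a + (Real.cos t : ℂ) • e b
  else e j

private lemma rot_apply_a (e : Fin n → EuclideanSpace ℂ (Fin n)) (a b : Fin n) (t : ℝ) :
    rot e a b t a = (Real.cos t : ℂ) • e a + (Real.sin t : ℂ) • e b := by
  simp [rot]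

private lemma rot_apply_b (e : Fin n → EuclideanSpace ℂ (Fin n)) {a b : Fin n} (hab : a ≠ b)
    (t : ℝ) :
    rot e a b t b = ((-Real.sin t : ℝ) : ℂ) • e a + (Real.cos t : ℂ) • e b := by
  simp [rot, Ne.symm hab]

private lemma rot_apply_other (e : Fin n → EuclideanSpace ℂ (Fin n)) {a b j : Fin n}
    (hja : j ≠ a) (hjb : j ≠ b) (t : ℝ) : rot e a b t j = e j := by
  simp [rot, hja, hjb]

private lemma rot_orthonormal {e : Fin n → EuclideanSpace ℂ (Fin n)} (he : Orthonormal ℂ e)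
    {a b : Fin n} (hab : a ≠ b) (t : ℝ) : Orthonormal ℂ (rot e a b t) := by
  have hee := orthonormal_iff_ite.mp he
  have iaa : (inner ℂ (e a) (e a) : ℂ) = 1 := by simp only [hee]; simp
  have ibb : (inner ℂ (e b) (e b) : ℂ) = 1 := by simp only [hee]; simp
  have iab : (inner ℂ (e a) (e b) : ℂ) = 0 := by simp [hee, hab]
  have iba : (inner ℂ (e b) (e a) : ℂ) = 0 := by simp [hee, hab.symm]
  have key : ∀ p q r s : ℝ,
      (inner ℂ ((p : ℂ) • e a + (q : ℂ) • e b) ((r : ℂ) • e a + (s : ℂ) • e b) : ℂ)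
        = ((p * r + q * s : ℝ) : ℂ) := by
    intro p q r s
    simp only [inner_add_left, inner_add_right, inner_smul_left, inner_smul_right,
      iaa, ibb, iab, iba, Complex.conj_ofReal, mul_one, mul_zero, add_zero, zero_add]
    push_cast
    ring
  have keyL : ∀ (p q : ℝ) (j : Fin n), j ≠ a → j ≠ b →
      (inner ℂ ((p : ℂ) • e a + (q : ℂ) • e b) (e j) : ℂ) = 0 := by
    intro p q j hja hjb
    rw [inner_add_left, inner_smul_left, inner_smul_left, hee, hee,
      if_neg (Ne.symm hja), if_neg (Ne.symm hjb)]
    ring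
  have keyR : ∀ (p q : ℝ) (j : Fin n), j ≠ a → j ≠ b →
      (inner ℂ (e j) ((p : ℂ) • e a + (q : ℂ) • e b) : ℂ) = 0 := by
    intro p q j hja hjb
    rw [inner_add_right, inner_smul_right, inner_smul_right, hee, hee,
      if_neg hja, if_neg hjb]
    ring
  rw [orthonormal_iff_ite]
  intro i j
  by_cases hia : i = a
  · subst hia
    by_cases hja : j = i
    · subst hja
      rw [rot_apply_a, key, if_pos rfl]
      have : Real.cos t * Real.cos t + Real.sin t * Real.sin t = 1 := by
        nlinarith [Real.sin_sq_add_cos_sq t]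
      rw [this]; norm_num
    · by_cases hjb : j = b
      · subst hjb
        rw [rot_apply_a, rot_apply_b e hab, key, if_neg hab]
        have : Real.cos t * -Real.sin t + Real.sin t * Real.cos t = 0 := by ring
        rw [this]; norm_num
      · rw [rot_apply_a, rot_apply_other e hja hjb,
          keyL _ _ j hja hjb, if_neg (fun h => hja h.symm)]
  · by_cases hib : i = b
    · subst hib
      by_cases hja : j = a
      · subst hja
        rw [rot_apply_b e hab, rot_apply_a, key, if_neg (Ne.symm hab)]
        have : -Real.sin t * Real.cos t + Real.cos t * Real.sin t = 0 := by ring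
        rw [this]; norm_num
      · by_cases hjb : j = i
        · subst hjb
          rw [rot_apply_b e hab, key, if_pos rfl]
          have : -Real.sin t * -Real.sin t + Real.cos t * Real.cos t = 1 := by
            nlinarith [Real.sin_sq_add_cos_sq t]
          rw [this]; norm_num
        · rw [rot_apply_b e hab, rot_apply_other e hja hjb,
            keyL _ _ j hja hjb, if_neg (fun h => hjb h.symm)]
    · by_cases hja : j = a
      · subst hja
        rw [rot_apply_other e hia hib, rot_apply_a, keyR _ _ i hia hib, if_neg hia]
      · by_cases hjb : j = b
        · subst hjb
          rw [rot_apply_other e hia hib, rot_apply_b e hab, keyR _ _ i hia hib, if_neg hib]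
        · rw [rot_apply_other e hia hib, rot_apply_other e hja hjb]
          exact hee i j

private lemma rot_zero (e : Fin n → EuclideanSpace ℂ (Fin n)) (a b : Fin n) :
    rot e a b 0 = e := by
  funext j
  by_cases hja : j = a
  · subst hja; rw [rot_apply_a]; simp
  · by_cases hjb : j = b
    · subst hjb
      by_cases hab : a = j
      · subst hab; rw [rot_apply_a]; simp
      · rw [rot_apply_b e hab]; simp
    · rw [rot_apply_other e hja hjb]


private lemma value_rot_swap (A : EuclideanSpace ℂ (Fin n) →L[ℂ] EuclideanSpace ℂ (Fin n))
    (c : Fin n → ℝ) (e : Fin n → EuclideanSpace ℂ (Fin n)) {a b : Fin n} (hab : a ≠ b) :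
    ∑ j, (c j : ℂ) * (inner ℂ (rot e a b (Real.pi / 2) j) (A (rot e a b (Real.pi / 2) j)) : ℂ)
      = ∑ j, (c j : ℂ) * (inner ℂ (e (Equiv.swap a b j)) (A (e (Equiv.swap a b j))) : ℂ) := by
  refine Finset.sum_congr rfl fun j _ => ?_
  by_cases hja : j = a
  · subst hja
    rw [rot_apply_a, Equiv.swap_apply_left, Real.cos_pi_div_two, Real.sin_pi_div_two]
    norm_num
  · by_cases hjb : j = b
    · rw [hjb, rot_apply_b e hab, Equiv.swap_apply_right, Real.cos_pi_div_two,
        Real.sin_pi_div_two]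
      have h1 : (((-1 : ℝ) : ℂ)) • e a + ((0 : ℝ) : ℂ) • e b = -(e a) := by
        push_cast; simp
      rw [h1, map_neg, inner_neg_neg]
    · rw [rot_apply_other e hja hjb, Equiv.swap_apply_of_ne_of_ne hja hjb]

private lemma rot_continuous (e : Fin n → EuclideanSpace ℂ (Fin n)) (a b : Fin n) (j : Fin n) :
    Continuous fun t => rot e a b t j := by
  by_cases hja : j = a
  · subst hja
    simp only [rot_apply_a]
    exact ((Complex.continuous_ofReal.comp Real.continuous_cos).smul continuous_const).add
      ((Complex.continuous_ofReal.comp Real.continuous_sin).smul continuous_const)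
  · by_cases hjb : j = b
    · subst hjb
      by_cases hab : a = j
      · subst hab
        simp only [rot_apply_a]
        exact ((Complex.continuous_ofReal.comp Real.continuous_cos).smul continuous_const).add
          ((Complex.continuous_ofReal.comp Real.continuous_sin).smul continuous_const)
      · simp only [rot_apply_b e hab]
        exact ((Complex.continuous_ofReal.comp Real.continuous_sin.neg).smul
          continuous_const).add
          ((Complex.continuous_ofReal.comp Real.continuous_cos).smul continuous_const)
    · simp only [rot_apply_other e hja hjb]
      exact continuous_const

private lemma ivt_step (hn : 0 < n) {S : Matrix (Fin n) (Fin n) ℂ} (hS : S.IsHermitian)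
    {c : Fin n → ℝ} (hc : Antitone c) {μ : Fin n → ℝ} (hμa : Antitone μ)
    {σ : Equiv.Perm (Fin n)} (hσ : μ = hS.eigenvalues ∘ σ)
    {e : Fin n → EuclideanSpace ℂ (Fin n)} (he : Orthonormal ℂ e)
    {a b : Fin n} (hab : a ≠ b) {x y : ℝ}
    (hx : ∑ j, (c j : ℂ) * (inner ℂ (e j) (Matrix.toEuclideanCLM (𝕜 := ℂ) S (e j)) : ℂ) = (x : ℂ))
    (hy : ∑ j, (c j : ℂ) * (inner ℂ (e (Equiv.swap a b j))
        (Matrix.toEuclideanCLM (𝕜 := ℂ) S (e (Equiv.swap a b j))) : ℂ) = (y : ℂ)) :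
    ∀ z ∈ Set.uIcc x y, ∃ f, Orthonormal ℂ f ∧
      ∑ j, (c j : ℂ) * (inner ℂ (f j) (Matrix.toEuclideanCLM (𝕜 := ℂ) S (f j)) : ℂ) = (z : ℂ) := by
  set A := Matrix.toEuclideanCLM (𝕜 := ℂ) S with hA
  set F : ℝ → ℝ :=
    fun t => (∑ j, (c j : ℂ) * (inner ℂ (rot e a b t j) (A (rot e a b t j)) : ℂ)).re with hF
  have hFval : ∀ t,
      ∑ j, (c j : ℂ) * (inner ℂ (rot e a b t j) (A (rot e a b t j)) : ℂ) = ((F t : ℝ) : ℂ) := by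
    intro t
    obtain ⟨v, _, hveq⟩ := value_mem_Icc hn hS hc hμa hσ (rot_orthonormal he hab t)
    have hFt : F t = v := by rw [hF]; simp only; rw [hveq]; simp
    rw [hveq, hFt]
  have hcont : Continuous F := by
    apply Complex.continuous_re.comp
    apply continuous_finset_sum
    intro j _
    exact continuous_const.mul
      ((rot_continuous e a b j).inner (A.continuous.comp (rot_continuous e a b j)))
  intro z hz
  have h0 : F 0 = x := by
    have h := hFval 0
    rw [rot_zero, hx] at h
    exact_mod_cast h.symm
  have h2 : F (Real.pi / 2) = y := by
    have h := (hFval (Real.pi / 2)).symm.trans ((value_rot_swap A c e hab).trans hy)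
    exact_mod_cast h
  have hsub := intermediate_value_uIcc
    (Continuous.continuousOn hcont (s := Set.uIcc (0 : ℝ) (Real.pi / 2)))
  rw [h0, h2] at hsub
  obtain ⟨t, _, hFt⟩ := hsub hz
  exact ⟨rot e a b t, rot_orthonormal he hab t, by rw [hFval t, hFt]⟩

private lemma value_perm {S : Matrix (Fin n) (Fin n) ℂ} (hS : S.IsHermitian)
    (c μ : Fin n → ℝ) (σ : Equiv.Perm (Fin n)) (hσ : μ = hS.eigenvalues ∘ σ)
    (π : Equiv.Perm (Fin n)) :
    ∑ j, (c j : ℂ) * (inner ℂ (hS.eigenvectorBasis (σ (π j)))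
        (Matrix.toEuclideanCLM (𝕜 := ℂ) S (hS.eigenvectorBasis (σ (π j)))) : ℂ)
      = ((∑ j, c j * μ (π j) : ℝ) : ℂ) := by
  push_cast
  refine Finset.sum_congr rfl fun j _ => ?_
  rw [applyV hS, inner_smul_right]
  have h1 : (inner ℂ (hS.eigenvectorBasis (σ (π j))) (hS.eigenvectorBasis (σ (π j))) : ℂ) = 1 := by
    simp [orthonormal_iff_ite.mp hS.eigenvectorBasis.orthonormal]
  rw [h1, mul_one, hσ]
  simp

end CNRmain

theorem stmt7 {n : ℕ} (hn : 0 < n) (S : Matrix (Fin n) (Fin n) ℂ) (hS : S.IsHermitian)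
    (c : Fin n → ℝ) (hc : Antitone c)
    (μ : Fin n → ℝ) (hμa : Antitone μ)
    (hμ : ∃ σ : Equiv.Perm (Fin n), μ = hS.eigenvalues ∘ σ) :
    cNumRange n c (Matrix.toEuclideanCLM (𝕜 := ℂ) S) =
      Complex.ofReal '' Set.Icc (∑ j, c j * μ j.rev) (∑ j, c j * μ j) := by
  classical
  obtain ⟨σ, hσ⟩ := hμ
  set T : Set ℝ := {x : ℝ | ∃ e : Fin n → EuclideanSpace ℂ (Fin n), Orthonormal ℂ e ∧
      ∑ j, (c j : ℂ) * (inner ℂ (e j) (Matrix.toEuclideanCLM (𝕜 := ℂ) S (e j)) : ℂ) = (x : ℂ)}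
    with hT
  have horth : ∀ π : Equiv.Perm (Fin n),
      Orthonormal ℂ (fun j => hS.eigenvectorBasis (σ (π j))) := fun π =>
    hS.eigenvectorBasis.orthonormal.comp _ (σ.injective.comp π.injective)
  have hvalT : ∀ π : Equiv.Perm (Fin n), (∑ j, c j * μ (π j)) ∈ T := fun π =>
    ⟨_, horth π, CNRmain.value_perm hS c μ σ hσ π⟩
  have hchain : ∀ π : Equiv.Perm (Fin n), ∃ C : Set ℝ, IsPreconnected C ∧ C ⊆ T ∧
      (∑ j, c j * μ j) ∈ C ∧ (∑ j, c j * μ (π j)) ∈ C := by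
    intro π
    refine Equiv.Perm.swap_induction_on' π ?_ ?_
    · refine ⟨{∑ j, c j * μ j}, isPreconnected_singleton, ?_, rfl, by simp⟩
      rw [Set.singleton_subset_iff]
      simpa using hvalT 1
    · rintro π a b hab ⟨C, hCp, hCT, hR, hπ⟩
      have hy := CNRmain.value_perm hS c μ σ hσ (π * Equiv.swap a b)
      have hsw := CNRmain.ivt_step hn hS hc hμa hσ (horth π) hab
        (CNRmain.value_perm hS c μ σ hσ π) hy
      refine ⟨C ∪ Set.uIcc (∑ j, c j * μ (π j)) (∑ j, c j * μ ((π * Equiv.swap a b) j)),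
        ?_, ?_, Or.inl hR, Or.inr Set.right_mem_uIcc⟩
      · exact hCp.union (∑ j, c j * μ (π j)) hπ Set.left_mem_uIcc isPreconnected_uIcc
      · exact Set.union_subset hCT (fun z hz => hsw z hz)
  ext z
  constructor
  · rintro ⟨e, he, rfl⟩
    obtain ⟨x, hxI, hxe⟩ := CNRmain.value_mem_Icc hn hS hc hμa hσ he
    exact ⟨x, hxI, hxe.symm⟩
  · rintro ⟨x, hxI, rfl⟩
    obtain ⟨C, hCp, hCT, hR, hL⟩ := hchain Fin.revPerm
    have hL' : (∑ j, c j * μ j.rev) ∈ C := by simpa using hL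
    obtain ⟨e, he, hee⟩ := hCT (hCp.Icc_subset hL' hR hxI)
    exact ⟨e, he, hee.symm⟩
end

section
/- Let c = (c_1,...,c_k) ∈ ℝ^k with c_1 ≥ ... ≥ c_k, and suppose there exists an integer p with 1 < p < k such that c_p + c_{k+1−p} ≠ 0 and c_j + c_{k+1−j} = 0 for j = 1,...,p−1. If A is a self-adjoint finite-rank operator on H with rank A < p, then W_c(A) = −W_c(A). -/
open Finset

lemma abel_aux : ∀ (r : ℕ) (μ s c' : ℕ → ℝ),
    (∀ i j, i ≤ j → j < r → μ j ≤ μ i) →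
    (∀ i, i < r → 0 ≤ μ i) →
    (∀ m, m ≤ r → ∑ n ∈ range m, s n ≤ ∑ n ∈ range m, c' n) →
    ∑ n ∈ range r, μ n * s n ≤ ∑ n ∈ range r, μ n * c' n := by
  intro r
  induction r with
  | zero => intro μ s c' _ _ _; simp
  | succ r ih =>
    intro μ s c' hmono hpos hs
    have hmr : 0 ≤ μ r := hpos r (Nat.lt_succ_self r)
    have ihv := ih (fun n => μ n - μ r) s c'
      (fun i j hij hj => by
        have := hmono i j hij (Nat.lt_succ_of_lt hj); linarith)
      (fun i hi => by
        have := hmono i r (Nat.le_of_lt hi) (Nat.lt_succ_self r); linarith)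
      (fun m hm => hs m (Nat.le_succ_of_le hm))
    have h2 := hs (r+1) le_rfl
    have e1 : ∀ (g : ℕ → ℝ), ∑ n ∈ range (r+1), μ n * g n
        = (∑ n ∈ range r, (μ n - μ r) * g n) + μ r * ∑ n ∈ range (r+1), g n := by
      intro g
      rw [Finset.sum_range_succ (f := fun n => μ n * g n), Finset.sum_range_succ g]
      simp only [sub_mul, Finset.sum_sub_distrib, Finset.mul_sum]
      rw [mul_add]
      rw [Finset.mul_sum]
      ring
    rw [e1 s, e1 c']
    have h3 : μ r * ∑ n ∈ range (r+1), s n ≤ μ r * ∑ n ∈ range (r+1), c' n :=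
      mul_le_mul_of_nonneg_left h2 hmr
    linarith

lemma ps_aux (K t : ℕ) (c' y : ℕ → ℝ)
    (hca : Antitone c') (hc0 : ∀ n, 0 ≤ c' n)
    (hy0 : ∀ n, 0 ≤ y n) (hy1 : ∀ n, y n ≤ 1)
    (hsum : ∑ n ∈ range K, y n ≤ t) :
    ∑ n ∈ range K, c' n * y n ≤ ∑ n ∈ range t, c' n := by
  rcases le_or_gt K t with h | h
  · calc ∑ n ∈ range K, c' n * y n ≤ ∑ n ∈ range K, c' n := by
          apply Finset.sum_le_sum
          intro n _
          nlinarith [hc0 n, hy0 n, hy1 n]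
    _ ≤ ∑ n ∈ range t, c' n := by
          apply Finset.sum_le_sum_of_subset_of_nonneg (Finset.range_subset_range.2 h)
          intro n _ _; exact hc0 n
  · have hsplit : ∀ (g : ℕ → ℝ), ∑ n ∈ range t, g n + ∑ n ∈ Ico t K, g n = ∑ n ∈ range K, g n :=
      fun g => Finset.sum_range_add_sum_Ico g h.le
    have hIco : ∑ n ∈ Ico t K, c' n * y n ≤ c' t * ∑ n ∈ Ico t K, y n := by
      rw [Finset.mul_sum]
      apply Finset.sum_le_sum
      intro n hn
      exact mul_le_mul_of_nonneg_right (hca (Finset.mem_Ico.1 hn).1) (hy0 n)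
    have hyt : ∑ n ∈ Ico t K, y n ≤ (t : ℝ) - ∑ n ∈ range t, y n := by
      have h1 := hsplit y
      have h2 : ((range t).card : ℝ) = t := by rw [Finset.card_range]
      linarith
    have hct : 0 ≤ c' t := hc0 t
    have key : ∑ n ∈ range t, c' n * y n + c' t * ((t : ℝ) - ∑ n ∈ range t, y n)
        ≤ ∑ n ∈ range t, c' n := by
      have e2 : c' t * ((t:ℝ) - ∑ n ∈ range t, y n) = ∑ n ∈ range t, c' t * (1 - y n) := by
        simp only [mul_sub, mul_one, Finset.sum_sub_distrib, Finset.sum_const,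
          Finset.card_range, nsmul_eq_mul, Finset.mul_sum]
        ring
      rw [e2, ← Finset.sum_add_distrib]
      apply Finset.sum_le_sum
      intro n hn
      have hnt : c' t ≤ c' n := hca (Finset.mem_range.1 hn).le
      nlinarith [hy0 n, hy1 n]
    have e3 : ∑ n ∈ range K, c' n * y n = ∑ n ∈ range t, c' n * y n + ∑ n ∈ Ico t K, c' n * y n :=
      (hsplit _).symm
    rw [e3]
    have h3 : c' t * ∑ n ∈ Ico t K, y n ≤ c' t * ((t:ℝ) - ∑ n ∈ range t, y n) :=
      mul_le_mul_of_nonneg_left hyt hct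
    linarith

lemma class_bound (t : ℕ) (c' : ℕ → ℝ) (hca : Antitone c') (hc0 : ∀ n, 0 ≤ c' n)
    (μ s : Fin t → ℝ) (hμ : ∀ i, 0 ≤ μ i)
    (hs : ∀ S : Finset (Fin t), ∑ i ∈ S, s i ≤ ∑ n ∈ range S.card, c' n) :
    ∃ ρ : Equiv.Perm (Fin t), ∑ i, μ i * s i ≤ ∑ i, μ i * c' ((ρ i : ℕ)) := by
  classical
  set τ : Equiv.Perm (Fin t) := Tuple.sort (fun i => -μ i) with hτ
  have hmono : ∀ a b : Fin t, a ≤ b → μ (τ b) ≤ μ (τ a) := by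
    intro a b hab
    have := Tuple.monotone_sort (fun i => -μ i) hab
    simpa using this
  set μh : ℕ → ℝ := fun n => if h : n < t then μ (τ ⟨n, h⟩) else 0 with hμh
  set sh : ℕ → ℝ := fun n => if h : n < t then s (τ ⟨n, h⟩) else 0 with hsh
  have habel := abel_aux t μh sh c'
    (fun i j hij hj => by
      simp only [μh]
      rw [dif_pos hj, dif_pos (lt_of_le_of_lt hij hj)]
      exact hmono ⟨i, _⟩ ⟨j, hj⟩ hij)
    (fun i hi => by simp only [μh]; rw [dif_pos hi]; exact hμ _)
    (fun m hm => by
      -- prefix bound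
      have e1 : ∑ n ∈ range m, sh n = ∑ a : Fin m, s (τ (Fin.castLE hm a)) := by
        rw [← Fin.sum_univ_eq_sum_range]
        apply Finset.sum_congr rfl
        intro a _
        simp only [sh]
        rw [dif_pos (lt_of_lt_of_le a.isLt hm)]
        rfl
      set S : Finset (Fin t) := Finset.image (fun a : Fin m => τ (Fin.castLE hm a)) univ with hS
      have hinj : Function.Injective (fun a : Fin m => τ (Fin.castLE hm a)) :=
        fun a b hab => (Fin.castLE_injective hm) (τ.injective hab)
      have hcard : S.card = m := by
        rw [hS, Finset.card_image_of_injective _ hinj, Finset.card_univ, Fintype.card_fin]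
      have e2 : ∑ i ∈ S, s i = ∑ a : Fin m, s (τ (Fin.castLE hm a)) := by
        rw [hS]
        exact Finset.sum_image (fun a _ b _ h => hinj h)
      have := hs S
      rw [hcard] at this
      rw [e1, ← e2]
      exact this)
  -- convert LHS and RHS
  have eL : ∑ n ∈ range t, μh n * sh n = ∑ i, μ i * s i := by
    rw [← Fin.sum_univ_eq_sum_range]
    have : ∀ a : Fin t, μh a * sh a = μ (τ a) * s (τ a) := by
      intro a
      simp only [μh, sh]
      rw [dif_pos a.isLt, dif_pos a.isLt]
    rw [Finset.sum_congr rfl (fun a _ => this a)]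
    exact Equiv.sum_comp τ (fun i => μ i * s i)
  have eR : ∑ n ∈ range t, μh n * c' n = ∑ i, μ i * c' ((τ.symm i : ℕ)) := by
    rw [← Fin.sum_univ_eq_sum_range]
    have e4 : ∀ a : Fin t, μh a * c' a = μ (τ a) * c' ((τ.symm (τ a) : ℕ)) := by
      intro a
      simp only [μh]
      rw [dif_pos a.isLt, Equiv.symm_apply_apply]
    rw [Finset.sum_congr rfl (fun a _ => e4 a)]
    exact Equiv.sum_comp τ (fun i => μ i * c' ((τ.symm i : ℕ)))
  exact ⟨τ.symm, by rw [← eL, ← eR]; exact habel⟩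

lemma sum_coe_class {r : ℕ} (T : Finset (Fin r)) (f : Fin r → ℝ) :
    ∑ i ∈ T, f i = ∑ a : Fin T.card, f ((T.orderIsoOfFin rfl a : T) : Fin r) := by
  rw [← Finset.sum_coe_sort T f]
  exact (Equiv.sum_comp (T.orderIsoOfFin rfl).toEquiv (fun z : ↥T => f z)).symm

lemma class_pack {r k : ℕ} (c' : ℕ → ℝ) (hca : Antitone c') (hc0 : ∀ n, 0 ≤ c' n)
    (T : Finset (Fin r)) (μ : Fin r → ℝ) (hμ : ∀ i ∈ T, 0 ≤ μ i)
    (w : Fin r → Fin k → ℝ) (hw0 : ∀ i j, 0 ≤ w i j)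
    (hrow : ∀ i, ∑ j, w i j ≤ 1) (hcol : ∀ j, ∑ i, w i j ≤ 1) :
    ∃ ρ : Equiv.Perm (Fin T.card),
      ∑ i ∈ T, μ i * ∑ j, c' j.val * w i j ≤
        ∑ a : Fin T.card, μ ((T.orderIsoOfFin rfl a : T) : Fin r) * c' ((ρ a : ℕ)) := by
  classical
  set eT := T.orderIsoOfFin rfl with heT
  set iT : Fin T.card → Fin r := fun a => ((eT a : T) : Fin r) with hiT
  have hiTinj : Function.Injective iT := by
    intro a b h
    exact eT.toEquiv.injective (Subtype.coe_injective h)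
  obtain ⟨ρ, hρ⟩ := class_bound T.card c' hca hc0
    (fun a => μ (iT a)) (fun a => ∑ j, c' j.val * w (iT a) j)
    (fun a => hμ _ (eT a).2)
    (by
      intro S
      set y : Fin k → ℝ := fun j => ∑ a ∈ S, w (iT a) j with hy
      have e1 : ∑ a ∈ S, ∑ j, c' j.val * w (iT a) j = ∑ j, c' j.val * y j := by
        rw [Finset.sum_comm]
        exact Finset.sum_congr rfl (fun j _ => by rw [Finset.mul_sum])
      have hy0' : ∀ j, 0 ≤ y j := fun j => Finset.sum_nonneg (fun a _ => hw0 _ _)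
      have hy1' : ∀ j, y j ≤ 1 := by
        intro j
        have e2 : ∑ a ∈ S, w (iT a) j = ∑ i ∈ S.image iT, w i j :=
          (Finset.sum_image (f := fun i => w i j) (g := iT) (fun a _ b _ h => hiTinj h)).symm
        rw [hy]
        simp only
        rw [e2]
        calc ∑ i ∈ S.image iT, w i j ≤ ∑ i, w i j :=
              Finset.sum_le_sum_of_subset_of_nonneg (Finset.subset_univ _)
                (fun i _ _ => hw0 i j)
          _ ≤ 1 := hcol j
      have hysum : ∑ j, y j ≤ (S.card : ℝ) := by
        rw [hy]
        simp only
        rw [Finset.sum_comm]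
        calc ∑ a ∈ S, ∑ j, w (iT a) j ≤ ∑ a ∈ S, (1:ℝ) :=
              Finset.sum_le_sum (fun a _ => hrow (iT a))
          _ = S.card := by simp
      set yh : ℕ → ℝ := fun n => if h : n < k then y ⟨n, h⟩ else 0 with hyh
      have e3 : ∑ j : Fin k, c' j.val * y j = ∑ n ∈ range k, c' n * yh n := by
        rw [← Fin.sum_univ_eq_sum_range (fun n => c' n * yh n) k]
        apply Finset.sum_congr rfl
        intro j _
        simp only [yh]
        rw [dif_pos j.isLt]
      have e4 : ∑ n ∈ range k, yh n = ∑ j : Fin k, y j := by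
        rw [← Fin.sum_univ_eq_sum_range yh k]
        apply Finset.sum_congr rfl
        intro j _
        simp only [yh]
        rw [dif_pos j.isLt]
      rw [e1, e3]
      apply ps_aux k S.card c' yh hca hc0
      · intro n; simp only [yh]; split
        · exact hy0' _
        · exact le_rfl
      · intro n; simp only [yh]; split
        · exact hy1' _
        · exact zero_le_one
      · rw [e4]; exact hysum)
  refine ⟨ρ, ?_⟩
  rw [sum_coe_class T (fun i => μ i * ∑ j, c' j.val * w i j)]
  exact hρ

def flipk {k : ℕ} (j : Fin k) : Fin k := ⟨k - 1 - j.val, by have := j.isLt; omega⟩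

lemma flipk_flipk {k : ℕ} (j : Fin k) : flipk (flipk j) = j := by
  have := j.isLt
  simp only [flipk]
  exact Fin.ext (by simp; omega)

lemma flipk_invol {k : ℕ} : Function.Involutive (flipk (k := k)) := flipk_flipk

lemma core {k p : ℕ} (hp1 : 1 < p) (hpk : p < k) (hk2p : 2*p ≤ k+1)
    (c : Fin k → ℝ) (hc : Antitone c)
    (hO : ∀ n : ℕ, n + 1 < p → ∀ (h1 : n < k) (h2 : k-1-n < k), c ⟨n, h1⟩ + c ⟨k-1-n, h2⟩ = 0)
    {r : ℕ} (hrp : r < p) (lam : Fin r → ℝ) (x : Fin r → Fin k → ℝ)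
    (hx0 : ∀ i j, 0 ≤ x i j) (hrow : ∀ i, ∑ j, x i j ≤ 1) (hcol : ∀ j, ∑ i, x i j ≤ 1) :
    ∃ σ : Fin r → Fin k, Function.Injective σ ∧ (∀ i, c (flipk (σ i)) = - c (σ i)) ∧
      ∑ i, lam i * ∑ j, c j * x i j ≤ ∑ i, lam i * c (σ i) := by
  classical
  have hcnn : ∀ n : ℕ, n + 1 < p → ∀ (h1 : n < k), 0 ≤ c ⟨n, h1⟩ := by
    intro n hn h1
    have h2 : k - 1 - n < k := by omega
    have hsum0 := hO n hn h1 h2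
    have hle : c ⟨k-1-n, h2⟩ ≤ c ⟨n, h1⟩ := hc (by simp [Fin.mk_le_mk]; omega)
    linarith
  set cp : ℕ → ℝ := fun n => if h : n < k then max (c ⟨n, h⟩) 0 else 0 with hcp_def
  set cm : ℕ → ℝ := fun n => if h : n < k then max (- c ⟨k-1-n, by omega⟩) 0 else 0 with hcm_def
  have hcp0 : ∀ n, 0 ≤ cp n := by
    intro n; simp only [cp]; split <;> simp
  have hcm0 : ∀ n, 0 ≤ cm n := by
    intro n; simp only [cm]; split <;> simp
  have hcpa : Antitone cp := by
    intro a b hab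
    simp only [cp]
    by_cases hb : b < k
    · rw [dif_pos hb, dif_pos (lt_of_le_of_lt hab hb)]
      exact max_le_max (hc (by simpa [Fin.mk_le_mk] using hab)) le_rfl
    · rw [dif_neg hb]
      exact hcp0 a
  have hcma : Antitone cm := by
    intro a b hab
    simp only [cm]
    by_cases hb : b < k
    · rw [dif_pos hb, dif_pos (lt_of_le_of_lt hab hb)]
      refine max_le_max ?_ le_rfl
      have : c ⟨k-1-a, by omega⟩ ≤ c ⟨k-1-b, by omega⟩ := hc (by simp [Fin.mk_le_mk]; omega)
      linarith
    · rw [dif_neg hb]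
      exact hcm0 a
  have hcpeq : ∀ n : ℕ, n + 1 < p → ∀ (h1 : n < k), cp n = c ⟨n, h1⟩ := by
    intro n hn h1
    simp only [cp]
    rw [dif_pos h1]
    exact max_eq_left (hcnn n hn h1)
  have hcmeq : ∀ n : ℕ, n + 1 < p → ∀ (h1 : n < k), cm n = c ⟨n, h1⟩ := by
    intro n hn h1
    have h2 : k - 1 - n < k := by omega
    have hsum0 := hO n hn h1 h2
    simp only [cm]
    rw [dif_pos h1]
    have e : - c ⟨k-1-n, h2⟩ = c ⟨n, h1⟩ := by linarith
    rw [e]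
    exact max_eq_left (hcnn n hn h1)
  -- the positive and negative classes
  set P : Finset (Fin r) := univ.filter (fun i => 0 ≤ lam i) with hP_def
  set N : Finset (Fin r) := univ.filter (fun i => ¬ 0 ≤ lam i) with hN_def
  have htP : P.card ≤ r := by
    calc P.card ≤ (univ : Finset (Fin r)).card := Finset.card_filter_le _ _
    _ = r := by simp
  have htN : N.card ≤ r := by
    calc N.card ≤ (univ : Finset (Fin r)).card := Finset.card_filter_le _ _
    _ = r := by simp
  set eP := P.orderIsoOfFin rfl with heP
  set eN := N.orderIsoOfFin rfl with heN
  set iP : Fin P.card → Fin r := fun a => ((eP a : P) : Fin r) with hiP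
  set iN : Fin N.card → Fin r := fun a => ((eN a : N) : Fin r) with hiN
  -- apply class_pack to the positive class
  obtain ⟨ρP, hρP⟩ := class_pack cp hcpa hcp0 P lam
    (fun i hi => (Finset.mem_filter.1 hi).2) x hx0 hrow hcol
  -- apply class_pack to the negative class
  have hcolflip : ∀ j : Fin k, ∑ i, x i (flipk j) ≤ 1 := fun j => hcol (flipk j)
  have hrowflip : ∀ i, ∑ j, x i (flipk j) ≤ 1 := by
    intro i
    have := Equiv.sum_comp (Function.Involutive.toPerm _ (flipk_invol (k := k)))
      (fun j => x i j)
    calc ∑ j, x i (flipk j) = ∑ j, x i j := this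
    _ ≤ 1 := hrow i
  obtain ⟨ρN, hρN⟩ := class_pack cm hcma hcm0 N (fun i => - lam i)
    (fun i hi => by
      have := (Finset.mem_filter.1 hi).2
      linarith [lt_of_not_ge this])
    (fun i j => x i (flipk j)) (fun i j => hx0 _ _) hrowflip hcolflip
  -- define sigma
  set σP : Fin P.card → Fin k := fun a => ⟨(ρP a).val, by have h1 := (ρP a).isLt; omega⟩
    with hσP_def
  set σN : Fin N.card → Fin k := fun a =>
    flipk ⟨(ρN a).val, by have h1 := (ρN a).isLt; omega⟩ with hσN_def
  set σ : Fin r → Fin k := fun i =>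
    if h : 0 ≤ lam i
    then σP (eP.symm ⟨i, Finset.mem_filter.2 ⟨Finset.mem_univ i, h⟩⟩)
    else σN (eN.symm ⟨i, Finset.mem_filter.2 ⟨Finset.mem_univ i, h⟩⟩) with hσ_def
  have hσ_pos : ∀ (i : Fin r) (h : 0 ≤ lam i),
      σ i = σP (eP.symm ⟨i, Finset.mem_filter.2 ⟨Finset.mem_univ i, h⟩⟩) := by
    intro i h
    simp only [hσ_def]
    rw [dif_pos h]
  have hσ_neg : ∀ (i : Fin r) (h : ¬ 0 ≤ lam i),
      σ i = σN (eN.symm ⟨i, Finset.mem_filter.2 ⟨Finset.mem_univ i, h⟩⟩) := by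
    intro i h
    simp only [hσ_def]
    rw [dif_neg h]
  rw [← heP] at hρP
  rw [← heN] at hρN
  -- sigma at class points
  have hσiP : ∀ a : Fin P.card, σ (iP a) = σP a := by
    intro a
    have hmem : iP a ∈ P := (eP a).2
    have h0 : 0 ≤ lam (iP a) := (Finset.mem_filter.1 hmem).2
    rw [hσ_pos (iP a) h0]
    congr 1
    rw [OrderIso.symm_apply_eq]
  have hσiN : ∀ a : Fin N.card, σ (iN a) = σN a := by
    intro a
    have hmem : iN a ∈ N := (eN a).2
    have h0 : ¬ 0 ≤ lam (iN a) := (Finset.mem_filter.1 hmem).2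
    rw [hσ_neg (iN a) h0]
    congr 1
    rw [OrderIso.symm_apply_eq]
  -- injectivity
  have hinj : Function.Injective σ := by
    intro i₁ i₂ h
    by_cases h₁ : 0 ≤ lam i₁ <;> by_cases h₂ : 0 ≤ lam i₂
    · rw [hσ_pos i₁ h₁, hσ_pos i₂ h₂] at h
      have hval0 := congrArg Fin.val h
      have hval : ((ρP (eP.symm ⟨i₁, Finset.mem_filter.2 ⟨Finset.mem_univ i₁, h₁⟩⟩)) : ℕ)
          = ((ρP (eP.symm ⟨i₂, Finset.mem_filter.2 ⟨Finset.mem_univ i₂, h₂⟩⟩)) : ℕ) := hval0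
      have h4 := eP.toEquiv.symm.injective (ρP.injective (Fin.ext hval))
      exact Subtype.mk_eq_mk.1 h4
    · exfalso
      rw [hσ_pos i₁ h₁, hσ_neg i₂ h₂] at h
      have hval := congrArg Fin.val h
      have l1 := (ρP (eP.symm ⟨i₁, Finset.mem_filter.2 ⟨Finset.mem_univ i₁, h₁⟩⟩)).isLt
      have l2 := (ρN (eN.symm ⟨i₂, Finset.mem_filter.2 ⟨Finset.mem_univ i₂, h₂⟩⟩)).isLt
      simp only [hσP_def, hσN_def, flipk] at hval
      omega
    · exfalso
      rw [hσ_neg i₁ h₁, hσ_pos i₂ h₂] at h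
      have hval := congrArg Fin.val h
      have l1 := (ρN (eN.symm ⟨i₁, Finset.mem_filter.2 ⟨Finset.mem_univ i₁, h₁⟩⟩)).isLt
      have l2 := (ρP (eP.symm ⟨i₂, Finset.mem_filter.2 ⟨Finset.mem_univ i₂, h₂⟩⟩)).isLt
      simp only [hσP_def, hσN_def, flipk] at hval
      omega
    · rw [hσ_neg i₁ h₁, hσ_neg i₂ h₂] at h
      have hval : ((ρN (eN.symm ⟨i₁, Finset.mem_filter.2 ⟨Finset.mem_univ i₁, h₁⟩⟩)) : ℕ)
          = ((ρN (eN.symm ⟨i₂, Finset.mem_filter.2 ⟨Finset.mem_univ i₂, h₂⟩⟩)) : ℕ) := by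
        have hv := congrArg Fin.val h
        simp only [hσN_def, flipk] at hv
        have l1 := (ρN (eN.symm ⟨i₁, Finset.mem_filter.2 ⟨Finset.mem_univ i₁, h₁⟩⟩)).isLt
        have l2 := (ρN (eN.symm ⟨i₂, Finset.mem_filter.2 ⟨Finset.mem_univ i₂, h₂⟩⟩)).isLt
        omega
      have h4 := eN.toEquiv.symm.injective (ρN.injective (Fin.ext hval))
      exact Subtype.mk_eq_mk.1 h4
  -- pairing
  have hpairP : ∀ a : Fin P.card, c (flipk (σP a)) = - c (σP a) := by
    intro a
    have hn : (ρP a).val + 1 < p := by have := (ρP a).isLt; omega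
    have h1 : (ρP a).val < k := by omega
    have h2 : k - 1 - (ρP a).val < k := by omega
    have h5 := hO (ρP a).val hn h1 h2
    have e1 : σP a = ⟨(ρP a).val, h1⟩ := rfl
    have e2 : flipk (σP a) = ⟨k - 1 - (ρP a).val, h2⟩ := rfl
    rw [e2, e1]
    linarith
  have hpairN : ∀ a : Fin N.card, c (flipk (σN a)) = - c (σN a) := by
    intro a
    have hn : (ρN a).val + 1 < p := by have := (ρN a).isLt; omega
    have h1 : (ρN a).val < k := by omega
    have h2 : k - 1 - (ρN a).val < k := by omega
    have h5 := hO (ρN a).val hn h1 h2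
    have e1 : σN a = ⟨k - 1 - (ρN a).val, h2⟩ := rfl
    have e2 : flipk (σN a) = ⟨(ρN a).val, h1⟩ := flipk_flipk ⟨(ρN a).val, h1⟩
    rw [e2, e1]
    linarith
  have hpair : ∀ i, c (flipk (σ i)) = - c (σ i) := by
    intro i
    by_cases h : 0 ≤ lam i
    · rw [hσ_pos i h]; exact hpairP _
    · rw [hσ_neg i h]; exact hpairN _
  -- coefficient identification
  have hcP_eq : ∀ a : Fin P.card, c (σP a) = cp ((ρP a) : ℕ) := by
    intro a
    have hn : (ρP a).val + 1 < p := by have := (ρP a).isLt; omega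
    have h1 : (ρP a).val < k := by omega
    exact (hcpeq _ hn h1).symm
  have hcN_eq : ∀ a : Fin N.card, c (σN a) = - cm ((ρN a) : ℕ) := by
    intro a
    have hn : (ρN a).val + 1 < p := by have := (ρN a).isLt; omega
    have h1 : (ρN a).val < k := by omega
    have h2 : k - 1 - (ρN a).val < k := by omega
    have h5 := hO (ρN a).val hn h1 h2
    have e1 : σN a = ⟨k - 1 - (ρN a).val, h2⟩ := rfl
    have e3 := hcmeq _ hn h1
    rw [e1, e3]
    linarith
  -- P part chain
  have hP1 : ∑ i ∈ P, lam i * ∑ j, c j * x i j ≤ ∑ i ∈ P, lam i * ∑ j, cp j.val * x i j := by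
    apply Finset.sum_le_sum
    intro i hi
    apply mul_le_mul_of_nonneg_left ?_ (Finset.mem_filter.1 hi).2
    apply Finset.sum_le_sum
    intro j _
    apply mul_le_mul_of_nonneg_right ?_ (hx0 i j)
    simp only [cp]
    rw [dif_pos j.isLt]
    simp only [Fin.eta]
    exact le_max_left _ _
  have hP3 : ∑ a : Fin P.card, lam (iP a) * cp ((ρP a : ℕ)) = ∑ i ∈ P, lam i * c (σ i) := by
    rw [sum_coe_class P (fun i => lam i * c (σ i)), ← heP]
    apply Finset.sum_congr rfl
    intro a _
    rw [show ((eP a : ↥P) : Fin r) = iP a from rfl, hσiP a, hcP_eq a]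
  -- N part chain
  have hN1 : ∑ i ∈ N, lam i * ∑ j, c j * x i j
      ≤ ∑ i ∈ N, (- lam i) * ∑ j, cm j.val * x i (flipk j) := by
    apply Finset.sum_le_sum
    intro i hi
    have hneg : lam i < 0 := lt_of_not_ge (Finset.mem_filter.1 hi).2
    have en : ∑ j, (-(c j)) * x i j = - ∑ j, c j * x i j := by
      rw [← Finset.sum_neg_distrib]
      apply Finset.sum_congr rfl
      intros; ring
    have e1 : lam i * ∑ j, c j * x i j = (- lam i) * ∑ j, (-(c j)) * x i j := by
      rw [en]; ring
    rw [e1]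
    apply mul_le_mul_of_nonneg_left ?_ (by linarith)
    have step1 : ∑ j, (-(c j)) * x i j ≤ ∑ j, cm (flipk j).val * x i j := by
      apply Finset.sum_le_sum
      intro j _
      apply mul_le_mul_of_nonneg_right ?_ (hx0 i j)
      have hj : (flipk j).val < k := (flipk j).isLt
      simp only [cm]
      rw [dif_pos hj]
      have ej : (⟨k - 1 - (flipk j).val, by omega⟩ : Fin k) = j := by
        apply Fin.ext
        have := j.isLt
        simp [flipk]
        omega
      rw [ej]
      exact le_max_left _ _
    have step2 : ∑ j, cm (flipk j).val * x i j = ∑ j, cm j.val * x i (flipk j) := by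
      have h := Equiv.sum_comp (Function.Involutive.toPerm _ (flipk_invol (k := k)))
        (fun j : Fin k => cm j.val * x i (flipk j))
      rw [← h]
      apply Finset.sum_congr rfl
      intro j _
      simp [Function.Involutive.coe_toPerm, flipk_flipk]
    rw [← step2]
    exact step1
  have hN3 : ∑ a : Fin N.card, (- lam (iN a)) * cm ((ρN a : ℕ)) = ∑ i ∈ N, lam i * c (σ i) := by
    rw [sum_coe_class N (fun i => lam i * c (σ i)), ← heN]
    apply Finset.sum_congr rfl
    intro a _
    rw [show ((eN a : ↥N) : Fin r) = iN a from rfl, hσiN a, hcN_eq a]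
    ring
  have hsplit := Finset.sum_filter_add_sum_filter_not univ (fun i => 0 ≤ lam i)
      (fun i => lam i * ∑ j, c j * x i j)
  have hsplit2 := Finset.sum_filter_add_sum_filter_not univ (fun i => 0 ≤ lam i)
      (fun i => lam i * c (σ i))
  refine ⟨σ, hinj, hpair, ?_⟩
  calc ∑ i, lam i * ∑ j, c j * x i j
      = ∑ i ∈ P, lam i * ∑ j, c j * x i j + ∑ i ∈ N, lam i * ∑ j, c j * x i j := hsplit.symm
    _ ≤ (∑ a : Fin P.card, lam (iP a) * cp ((ρP a : ℕ)))
        + ∑ a : Fin N.card, (- lam (iN a)) * cm ((ρN a : ℕ)) :=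
      add_le_add (le_trans hP1 hρP) (le_trans hN1 hρN)
    _ = ∑ i ∈ P, lam i * c (σ i) + ∑ i ∈ N, lam i * c (σ i) := by rw [hP3, hN3]
    _ = ∑ i, lam i * c (σ i) := hsplit2

lemma perm_extend {r k : ℕ} (hrk : r ≤ k) (σ : Fin r → Fin k) (hσ : Function.Injective σ) :
    ∃ π : Equiv.Perm (Fin k), ∀ i : Fin r, π (σ i) = Fin.castLE hrk i := by
  classical
  have hcast : Function.Injective (Fin.castLE hrk) := Fin.castLE_injective hrk
  have hcard : Fintype.card ↥(Set.range σ)ᶜ = Fintype.card ↥(Set.range (Fin.castLE hrk))ᶜ := by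
    rw [Fintype.card_compl_set, Fintype.card_compl_set,
      Set.card_range_of_injective hσ, Set.card_range_of_injective hcast]
  set eC := Fintype.equivOfCardEq hcard with heC
  refine ⟨((Equiv.sumCompl (· ∈ Set.range σ)).symm.trans
      (((Equiv.ofInjective σ hσ).symm.trans (Equiv.ofInjective _ hcast)).sumCongr eC)).trans
      (Equiv.sumCompl (· ∈ Set.range (Fin.castLE hrk))), ?_⟩
  intro i
  simp only [Equiv.trans_apply]
  rw [Equiv.sumCompl_symm_apply_of_pos (Set.mem_range_self i)]
  simp only [Equiv.sumCongr_apply, Sum.map_inl, Equiv.trans_apply]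
  rw [show (⟨σ i, Set.mem_range_self i⟩ : {x // x ∈ Set.range σ}) = ⟨σ i, ⟨i, rfl⟩⟩ from rfl]
  rw [Equiv.ofInjective_symm_apply hσ i]
  rw [Equiv.ofInjective_apply]
  exact Equiv.sumCompl_apply_inl _

lemma spectral_decomp {H : Type*} [NormedAddCommGroup H] [InnerProductSpace ℂ H] [CompleteSpace H]
    (A : H →L[ℂ] H) (hA : IsSelfAdjoint A)
    [hfin : FiniteDimensional ℂ (LinearMap.range (A : H →ₗ[ℂ] H))]
    (n : ℕ) (hn : Module.finrank ℂ (LinearMap.range (A : H →ₗ[ℂ] H)) = n) :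
    ∃ (v : Fin n → H)
      (lam : Fin n → ℝ),
      Orthonormal ℂ v ∧ ∀ x : H, A x = ∑ i, ((lam i : ℂ) * (inner ℂ (v i) x : ℂ)) • v i := by
  classical
  set V := LinearMap.range (A : H →ₗ[ℂ] H) with hV
  have hmem : ∀ x ∈ V, (A : H →ₗ[ℂ] H) x ∈ V := fun x _ => LinearMap.mem_range_self _ x
  set T : V →ₗ[ℂ] V := (A : H →ₗ[ℂ] H).restrict hmem with hT_def
  have hsym := hA.isSymmetric
  have hT : T.IsSymmetric := by
    intro u w
    have h1 := hsym (u : H) (w : H)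
    simpa [hT_def, Submodule.coe_inner, LinearMap.restrict_apply] using h1
  have hn2 : Module.finrank ℂ V = n := hn
  set b := hT.eigenvectorBasis hn2 with hb
  set lam := hT.eigenvalues hn2 with hlam
  set v : Fin n → H := fun i => ((b i : V) : H) with hv
  have hortho : Orthonormal ℂ v := by
    rw [orthonormal_iff_ite]
    intro i j
    have := b.orthonormal
    rw [orthonormal_iff_ite] at this
    have h2 := this i j
    rwa [Submodule.coe_inner] at h2
  have hAv : ∀ i, A (v i) = (lam i : ℂ) • v i := by
    intro i
    have h1 := hT.apply_eigenvectorBasis hn2 i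
    have h2 : ((T (b i) : V) : H) = A (v i) := by
      rw [hT_def]
      rfl
    rw [← h2, h1]
    simp
    rfl
  refine ⟨v, lam, hortho, ?_⟩
  intro x
  have hproj : x - (Submodule.orthogonalProjection V x : H) ∈ Vᗮ :=
    Submodule.sub_starProjection_mem_orthogonal (K := V) x
  have hker : ∀ y ∈ Vᗮ, A y = 0 := by
    intro y hy
    have h2 : A (A y) ∈ V := by
      rw [hV]
      exact LinearMap.mem_range_self _ (A y)
    have h3 : (inner ℂ (A y) (A y) : ℂ) = inner ℂ y (A (A y)) := hsym y (A y)
    have h4 : (inner ℂ y (A (A y)) : ℂ) = 0 := by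
      rw [← inner_conj_symm]
      rw [Submodule.inner_right_of_mem_orthogonal h2 hy]
      simp
    rw [h4] at h3
    exact inner_self_eq_zero.1 h3
  have hsplit : A x = A ((Submodule.orthogonalProjection V x : H)) := by
    have e : x = (Submodule.orthogonalProjection V x : H) + (x - (Submodule.orthogonalProjection V x : H)) := by
      abel
    nth_rewrite 1 [e]
    rw [map_add, hker _ hproj, add_zero]
  have hinn : ∀ i, (inner ℂ (v i) ((Submodule.orthogonalProjection V x : H)) : ℂ) = inner ℂ (v i) x := by
    intro i
    have hmemV : v i ∈ V := (b i).2
    have h0 : (inner ℂ (v i) (x - (Submodule.orthogonalProjection V x : H)) : ℂ) = 0 :=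
      Submodule.inner_right_of_mem_orthogonal hmemV hproj
    rw [inner_sub_right] at h0
    linear_combination -h0
  have hPx : (Submodule.orthogonalProjection V x : V)
      = ∑ i, (inner ℂ (b i) (Submodule.orthogonalProjection V x) : ℂ) • b i := by
    conv_lhs => rw [← b.sum_repr (Submodule.orthogonalProjection V x)]
    exact Finset.sum_congr rfl fun i _ => by rw [b.repr_apply_apply]
  have hPxH : ((Submodule.orthogonalProjection V x : V) : H)
      = ∑ i, (inner ℂ (v i) x : ℂ) • v i := by
    rw [hPx]
    push_cast
    apply Finset.sum_congr rfl
    intro i _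
    have : (inner ℂ (b i) (Submodule.orthogonalProjection V x) : ℂ)
        = (inner ℂ (v i) ((Submodule.orthogonalProjection V x : H)) : ℂ) := by
      rw [Submodule.coe_inner]
    rw [this, hinn i]
  rw [hsplit, hPxH, map_sum]
  apply Finset.sum_congr rfl
  intro i _
  rw [map_smul, hAv i, smul_smul, mul_comm]

lemma extend_frame {H : Type*} [NormedAddCommGroup H] [InnerProductSpace ℂ H]
    (k r : ℕ) (hrk : r ≤ k) (v : Fin r → H) (hv : Orthonormal ℂ v)
    (e : Fin k → H) (he : Orthonormal ℂ e) :
    ∃ u : Fin k → H, Orthonormal ℂ u ∧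
      (∀ j : Fin k, (h : j.val < r) → u j = v ⟨j.val, h⟩) ∧
      (∀ j : Fin k, r ≤ j.val → ∀ i : Fin r, (inner ℂ (v i) (u j) : ℂ) = 0) := by
  classical
  set U := Submodule.span ℂ (Set.range v ∪ Set.range e) with hU
  have hfinU : FiniteDimensional ℂ U := by
    apply FiniteDimensional.span_of_finite
    exact (Set.finite_range v).union (Set.finite_range e)
  have hvU : ∀ i, v i ∈ U := fun i =>
    Submodule.subset_span (Set.mem_union_left _ (Set.mem_range_self i))
  have heU : ∀ j, e j ∈ U := fun j =>
    Submodule.subset_span (Set.mem_union_right _ (Set.mem_range_self j))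
  -- k ≤ finrank U
  have hkU : k ≤ Module.finrank ℂ U := by
    have h1 : Submodule.span ℂ (Set.range e) ≤ U := by
      rw [hU]
      exact Submodule.span_mono Set.subset_union_right
    have h2 : Module.finrank ℂ (Submodule.span ℂ (Set.range e)) = k := by
      rw [finrank_span_eq_card he.linearIndependent, Fintype.card_fin]
    calc k = Module.finrank ℂ (Submodule.span ℂ (Set.range e)) := h2.symm
      _ ≤ Module.finrank ℂ U := Submodule.finrank_mono h1
  set vU : Fin r → U := fun i => ⟨v i, hvU i⟩ with hvU_def
  have hvUorth : Orthonormal ℂ vU := by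
    rw [orthonormal_iff_ite]
    intro i j
    rw [Submodule.coe_inner]
    have := hv
    rw [orthonormal_iff_ite] at this
    exact this i j
  set W := (Submodule.span ℂ (Set.range vU))ᗮ with hW
  have hrW : k - r ≤ Module.finrank ℂ W := by
    have h1 : Module.finrank ℂ (Submodule.span ℂ (Set.range vU)) = r := by
      rw [finrank_span_eq_card hvUorth.linearIndependent, Fintype.card_fin]
    have h2 := Submodule.finrank_add_finrank_orthogonal (Submodule.span ℂ (Set.range vU))
    rw [h1, ← hW] at h2
    omega
  set onb := stdOrthonormalBasis ℂ W with honb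
  set w : Fin (k - r) → H := fun m =>
    (((onb ⟨m.val, lt_of_lt_of_le m.isLt hrW⟩ : W) : U) : H) with hw
  have hworth : ∀ m m' : Fin (k - r), (inner ℂ (w m) (w m') : ℂ) = if m = m' then 1 else 0 := by
    intro m m'
    have := onb.orthonormal
    rw [orthonormal_iff_ite] at this
    have h1 := this ⟨m.val, lt_of_lt_of_le m.isLt hrW⟩ ⟨m'.val, lt_of_lt_of_le m'.isLt hrW⟩
    rw [Submodule.coe_inner, Submodule.coe_inner] at h1
    rw [hw]
    simp only
    rw [h1]
    congr 1
    simp [Fin.ext_iff]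
  have hvw : ∀ (i : Fin r) (m : Fin (k - r)), (inner ℂ (v i) (w m) : ℂ) = 0 := by
    intro i m
    have hmem : vU i ∈ Submodule.span ℂ (Set.range vU) :=
      Submodule.subset_span (Set.mem_range_self i)
    have hperp : (onb ⟨m.val, lt_of_lt_of_le m.isLt hrW⟩ : U) ∈ W :=
      (onb ⟨m.val, lt_of_lt_of_le m.isLt hrW⟩).2
    have h1 : (inner ℂ (vU i) ((onb ⟨m.val, lt_of_lt_of_le m.isLt hrW⟩ : W) : U) : ℂ) = 0 :=
      Submodule.inner_right_of_mem_orthogonal hmem hperp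
    rw [Submodule.coe_inner] at h1
    exact h1
  have hwv : ∀ (m : Fin (k - r)) (i : Fin r), (inner ℂ (w m) (v i) : ℂ) = 0 := by
    intro m i
    rw [← inner_conj_symm, hvw i m]
    simp
  refine ⟨fun j => if h : j.val < r then v ⟨j.val, h⟩ else w ⟨j.val - r, by omega⟩, ?_, ?_, ?_⟩
  · rw [orthonormal_iff_ite]
    intro j1 j2
    have hv' := hv
    rw [orthonormal_iff_ite] at hv'
    by_cases h1 : j1.val < r <;> by_cases h2 : j2.val < r
    · rw [dif_pos h1, dif_pos h2, hv' ⟨j1.val, h1⟩ ⟨j2.val, h2⟩]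
      congr 1
      simp [Fin.ext_iff]
    · rw [dif_pos h1, dif_neg h2, hvw]
      have : j1 ≠ j2 := by intro hh; rw [hh] at h1; exact h2 h1
      simp [this]
    · rw [dif_neg h1, dif_pos h2, hwv]
      have : j1 ≠ j2 := by intro hh; rw [hh] at h1; exact h1 h2
      simp [this]
    · rw [dif_neg h1, dif_neg h2, hworth]
      congr 1
      simp only [eq_iff_iff, Fin.ext_iff]
      omega
  · intro j h
    simp only [dif_pos h]
  · intro j h i
    have hnot : ¬ (j : ℕ) < r := by omega
    simp only [dif_neg hnot]
    exact hvw i _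

lemma swap_ivt {H : Type*} [NormedAddCommGroup H] [InnerProductSpace ℂ H]
    (k : ℕ) (c : Fin k → ℝ) (q : H → ℝ) (hqc : Continuous q) (hqn : ∀ x : H, q (-x) = q x)
    (u : Fin k → H) (hu : Orthonormal ℂ u) (a b : Fin k) (hab : a ≠ b) :
    Set.uIcc (∑ j, c j * q (u j)) (∑ j, c j * q (u (Equiv.swap a b j))) ⊆
      {w : ℝ | ∃ f : Fin k → H, Orthonormal ℂ f ∧ w = ∑ j, c j * q (f j)} := by
  classical
  set F : ℝ → Fin k → H := fun t j =>
    if j = a then (Real.cos t : ℂ) • u a + (Real.sin t : ℂ) • u b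
    else if j = b then (Real.sin t : ℂ) • u a - (Real.cos t : ℂ) • u b
    else u j with hF
  have hu' := hu
  rw [orthonormal_iff_ite] at hu'
  have hFa : ∀ t, F t a = (Real.cos t : ℂ) • u a + (Real.sin t : ℂ) • u b := by
    intro t; simp [hF]
  have hFb : ∀ t, F t b = (Real.sin t : ℂ) • u a - (Real.cos t : ℂ) • u b := by
    intro t; simp [hF, Ne.symm hab]
  have hFo : ∀ t (j : Fin k), j ≠ a → j ≠ b → F t j = u j := by
    intro t j h1 h2; simp [hF, h1, h2]
  have haa : (inner ℂ (u a) (u a) : ℂ) = 1 := by simpa using hu' a a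
  have hbb : (inner ℂ (u b) (u b) : ℂ) = 1 := by simpa using hu' b b
  have hab0 : (inner ℂ (u a) (u b) : ℂ) = 0 := by simpa [hab] using hu' a b
  have hba0 : (inner ℂ (u b) (u a) : ℂ) = 0 := by simpa [Ne.symm hab] using hu' b a
  have horth : ∀ t, Orthonormal ℂ (F t) := by
    intro t
    have htrig : Real.cos t * Real.cos t + Real.sin t * Real.sin t = 1 := by
      nlinarith [Real.sin_sq_add_cos_sq t]
    rw [orthonormal_iff_ite]
    intro i j
    by_cases hia : i = a
    · subst hia
      by_cases hja : j = i
      · subst hja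
        rw [if_pos rfl, hFa]
        simp only [inner_add_left, inner_add_right, inner_smul_left, inner_smul_right,
          haa, hbb, hab0, hba0, Complex.conj_ofReal, mul_one, mul_zero, add_zero, zero_add]
        exact_mod_cast htrig
      · by_cases hjb : j = b
        · subst hjb
          rw [if_neg hab, hFa, hFb]
          simp only [inner_add_left, inner_sub_right, inner_smul_left, inner_smul_right,
            haa, hbb, hab0, hba0, Complex.conj_ofReal, mul_one, mul_zero, add_zero, zero_add]
          ring
        · rw [if_neg (fun h => hja h.symm), hFa, hFo t j (fun h => hja h) hjb]
          have h1 : (inner ℂ (u i) (u j) : ℂ) = 0 := by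
            rw [hu' i j, if_neg (fun h => hja h.symm)]
          have h2 : (inner ℂ (u b) (u j) : ℂ) = 0 := by
            rw [hu' b j, if_neg (fun h => hjb h.symm)]
          simp only [inner_add_left, inner_smul_left, h1, h2, mul_zero, add_zero]
    · by_cases hib : i = b
      · subst hib
        by_cases hja : j = a
        · subst hja
          rw [if_neg (fun h => hab h.symm), hFb, hFa]
          simp only [inner_sub_left, inner_add_right, inner_smul_left, inner_smul_right,
            haa, hbb, hab0, hba0, Complex.conj_ofReal, mul_one, mul_zero, add_zero, zero_add]
          ring
        · by_cases hjb : j = i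
          · subst hjb
            rw [if_pos rfl, hFb]
            simp only [inner_sub_left, inner_sub_right, inner_smul_left, inner_smul_right,
              haa, hbb, hab0, hba0, Complex.conj_ofReal, mul_one, mul_zero, add_zero, zero_add,
              sub_zero, zero_sub, sub_neg_eq_add]
            exact_mod_cast (by nlinarith [htrig] :
              Real.sin t * Real.sin t - Real.cos t * -Real.cos t = 1)
          · rw [if_neg (fun h => hjb h.symm), hFb, hFo t j hja (fun h => hjb h)]
            have h1 : (inner ℂ (u a) (u j) : ℂ) = 0 := by
              rw [hu' a j, if_neg (fun h => hja h.symm)]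
            have h2 : (inner ℂ (u i) (u j) : ℂ) = 0 := by
              rw [hu' i j, if_neg (fun h => hjb h.symm)]
            simp only [inner_sub_left, inner_smul_left, h1, h2, mul_zero, sub_zero]
      · rw [hFo t i hia hib]
        by_cases hja : j = a
        · subst hja
          rw [if_neg hia, hFa]
          have h1 : (inner ℂ (u i) (u j) : ℂ) = 0 := by
            rw [hu' i j, if_neg hia]
          have h2 : (inner ℂ (u i) (u b) : ℂ) = 0 := by
            rw [hu' i b, if_neg hib]
          simp only [inner_add_right, inner_smul_right, h1, h2, mul_zero, add_zero]
        · by_cases hjb : j = b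
          · subst hjb
            rw [if_neg hib, hFb]
            have h1 : (inner ℂ (u i) (u a) : ℂ) = 0 := by
              rw [hu' i a, if_neg hia]
            have h2 : (inner ℂ (u i) (u j) : ℂ) = 0 := by
              rw [hu' i j, if_neg hib]
            simp only [inner_sub_right, inner_smul_right, h1, h2, mul_zero, sub_zero]
          · rw [hFo t j hja hjb]
            exact hu' i j
  have hcont : Continuous (fun t => ∑ j, c j * q (F t j)) := by
    apply continuous_finset_sum
    intro j _
    apply Continuous.mul continuous_const
    apply hqc.comp
    by_cases hja : j = a
    · subst hja
      have : (fun t => F t j) = fun t =>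
          (Real.cos t : ℂ) • u j + (Real.sin t : ℂ) • u b := funext fun t => hFa t
      rw [this]
      exact (((Complex.continuous_ofReal.comp Real.continuous_cos).smul continuous_const).add
        ((Complex.continuous_ofReal.comp Real.continuous_sin).smul continuous_const))
    · by_cases hjb : j = b
      · subst hjb
        have : (fun t => F t j) = fun t =>
            (Real.sin t : ℂ) • u a - (Real.cos t : ℂ) • u j := funext fun t => hFb t
        rw [this]
        exact (((Complex.continuous_ofReal.comp Real.continuous_sin).smul continuous_const).sub
          ((Complex.continuous_ofReal.comp Real.continuous_cos).smul continuous_const))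
      · have : (fun t => F t j) = fun _ => u j := funext fun t => hFo t j hja hjb
        rw [this]
        exact continuous_const
  have hF0 : ∑ j, c j * q (F 0 j) = ∑ j, c j * q (u j) := by
    apply Finset.sum_congr rfl
    intro j _
    congr 1
    by_cases hja : j = a
    · subst hja
      rw [hFa]
      norm_num [Real.sin_zero, Real.cos_zero]
    · by_cases hjb : j = b
      · subst hjb
        rw [hFb]
        have e : (Real.sin 0 : ℂ) • u a - (Real.cos 0 : ℂ) • u j = -(u j) := by
          norm_num [Real.sin_zero, Real.cos_zero]
        rw [e, hqn]
      · rw [hFo 0 j hja hjb]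
  have hFpi : ∑ j, c j * q (F (Real.pi/2) j) = ∑ j, c j * q (u (Equiv.swap a b j)) := by
    apply Finset.sum_congr rfl
    intro j _
    congr 1
    by_cases hja : j = a
    · subst hja
      rw [hFa, Equiv.swap_apply_left]
      norm_num [Real.sin_pi_div_two, Real.cos_pi_div_two]
    · by_cases hjb : j = b
      · subst hjb
        rw [hFb, Equiv.swap_apply_right]
        norm_num [Real.sin_pi_div_two, Real.cos_pi_div_two]
      · rw [hFo _ j hja hjb, Equiv.swap_apply_of_ne_of_ne hja hjb]
  intro w hw
  have h1 := intermediate_value_uIcc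
    (f := fun t => ∑ j, c j * q (F t j)) (a := 0) (b := Real.pi/2) hcont.continuousOn
  beta_reduce at h1
  rw [hF0, hFpi] at h1
  obtain ⟨t, _, hgt⟩ := h1 hw
  exact ⟨F t, horth t, hgt.symm⟩

lemma swap_chain {H : Type*} [NormedAddCommGroup H] [InnerProductSpace ℂ H]
    (k : ℕ) (c : Fin k → ℝ) (q : H → ℝ) (hqc : Continuous q) (hqn : ∀ x : H, q (-x) = q x)
    (π : Equiv.Perm (Fin k)) :
    ∀ (u : Fin k → H), Orthonormal ℂ u →
      Set.uIcc (∑ j, c j * q (u j)) (∑ j, c j * q (u (π j))) ⊆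
        {w : ℝ | ∃ f : Fin k → H, Orthonormal ℂ f ∧ w = ∑ j, c j * q (f j)} := by
  refine Equiv.Perm.swap_induction_on
    (motive := fun π => ∀ (u : Fin k → H), Orthonormal ℂ u →
      Set.uIcc (∑ j, c j * q (u j)) (∑ j, c j * q (u (π j))) ⊆
        {w : ℝ | ∃ f : Fin k → H, Orthonormal ℂ f ∧ w = ∑ j, c j * q (f j)}) π ?_ ?_
  · intro u hu
    simp only [Equiv.Perm.one_apply, Set.uIcc_self]
    intro w hw
    rw [Set.mem_singleton_iff] at hw
    exact ⟨u, hu, hw⟩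
  · intro f x y hxy ih u hu
    have hswap : Orthonormal ℂ (fun j => u (Equiv.swap x y j)) :=
      hu.comp _ (Equiv.swap x y).injective
    have h2 := ih (fun j => u (Equiv.swap x y j)) hswap
    have h1 := swap_ivt k c q hqc hqn u hu x y hxy
    have hsub := Set.uIcc_subset_uIcc_union_uIcc
      (a := ∑ j, c j * q (u j)) (b := ∑ j, c j * q (u (Equiv.swap x y j)))
      (c := ∑ j, c j * q (u (Equiv.swap x y (f j))))
    intro w hw
    have hw2 : w ∈ Set.uIcc (∑ j, c j * q (u j)) (∑ j, c j * q (u (Equiv.swap x y (f j)))) := by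
      have e : ∀ j, u ((Equiv.swap x y * f) j) = u (Equiv.swap x y (f j)) := fun j => rfl
      simpa [e] using hw
    rcases hsub hw2 with h | h
    · exact h1 h
    · exact h2 h

lemma sum_fin_left {k r : ℕ} (hrk : r ≤ k) (G : Fin k → ℝ)
    (h0 : ∀ j : Fin k, r ≤ j.val → G j = 0) :
    ∑ j, G j = ∑ i : Fin r, G (Fin.castLE hrk i) := by
  set f : ℕ → ℝ := fun n => if h : n < k then G ⟨n, h⟩ else 0 with hf
  have e1 : ∑ j : Fin k, G j = ∑ n ∈ Finset.range k, f n := by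
    rw [← Fin.sum_univ_eq_sum_range f k]
    apply Finset.sum_congr rfl
    intro j _
    simp only [f]
    rw [dif_pos j.isLt]
  have e2 : ∑ i : Fin r, G (Fin.castLE hrk i) = ∑ n ∈ Finset.range r, f n := by
    rw [← Fin.sum_univ_eq_sum_range f r]
    apply Finset.sum_congr rfl
    intro i _
    simp only [f]
    rw [dif_pos (lt_of_lt_of_le i.isLt hrk)]
    rfl
  rw [e1, e2, ← Finset.sum_range_add_sum_Ico f hrk]
  have hz : ∑ n ∈ Finset.Ico r k, f n = 0 := by
    apply Finset.sum_eq_zero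
    intro n hn
    have hn' := Finset.mem_Ico.1 hn
    simp only [f]
    rw [dif_pos hn'.2]
    exact h0 _ hn'.1
  rw [hz, add_zero]

open scoped Pointwise

theorem stmt11 {H : Type*} [NormedAddCommGroup H] [InnerProductSpace ℂ H] [CompleteSpace H]
    (k p : ℕ) (hp1 : 1 < p) (hpk : p < k)
    (hk : (k : Cardinal) ≤ Module.rank ℂ H)
    (c : Fin k → ℝ) (hc : Antitone c)
    (hcp : c ⟨p - 1, by omega⟩ + c ⟨k - p, by omega⟩ ≠ 0)
    (hcj : ∀ j (hj1 : 1 ≤ j) (hj2 : j ≤ p - 1), c ⟨j - 1, by omega⟩ + c ⟨k - j, by omega⟩ = 0)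
    (A : H →L[ℂ] H) (hA : IsSelfAdjoint A)
    (hrank : LinearMap.rank (A : H →ₗ[ℂ] H) < (p : Cardinal)) :
    cNumRange k c A = -cNumRange k c A := by
  classical
  suffices hsub : cNumRange k c A ⊆ -cNumRange k c A by
    refine Set.Subset.antisymm hsub ?_
    intro z hz
    rw [Set.mem_neg] at hz
    have h2 := hsub hz
    rw [Set.mem_neg, neg_neg] at h2
    exact h2
  have hk2p : 2*p ≤ k + 1 := by
    by_contra hcon
    push_neg at hcon
    have hj1 : 1 ≤ k+1-p := by omega
    have hj2 : k+1-p ≤ p - 1 := by omega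
    have h3 := hcj (k+1-p) hj1 hj2
    apply hcp
    have e1 : c (⟨p - 1, by omega⟩ : Fin k) = c ⟨k-(k+1-p), by omega⟩ :=
      congrArg c (Fin.mk_eq_mk.2 (by omega))
    have e2 : c (⟨k - p, by omega⟩ : Fin k) = c ⟨k+1-p-1, by omega⟩ :=
      congrArg c (Fin.mk_eq_mk.2 (by omega))
    rw [e1, e2, add_comm]
    exact h3
  have hO : ∀ n : ℕ, n + 1 < p → ∀ (h1 : n < k) (h2 : k-1-n < k),
      c ⟨n, h1⟩ + c ⟨k-1-n, h2⟩ = 0 := by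
    intro n hn h1 h2
    have h3 := hcj (n+1) (by omega) (by omega)
    have e1 : c (⟨n+1-1, by omega⟩ : Fin k) = c ⟨n, h1⟩ := congrArg c (Fin.mk_eq_mk.2 (by omega))
    have e2 : c (⟨k-(n+1), by omega⟩ : Fin k) = c ⟨k-1-n, h2⟩ := congrArg c (Fin.mk_eq_mk.2 (by omega))
    rw [e1, e2] at h3
    exact h3
  have hrank2 : Module.rank ℂ (LinearMap.range (A : H →ₗ[ℂ] H)) < (p : Cardinal) := hrank
  haveI hfinV : FiniteDimensional ℂ (LinearMap.range (A : H →ₗ[ℂ] H)) :=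
    Module.rank_lt_aleph0_iff.1 (hrank2.trans (Cardinal.nat_lt_aleph0 p))
  obtain ⟨r, hr⟩ : ∃ r : ℕ, Module.finrank ℂ (LinearMap.range (A : H →ₗ[ℂ] H)) = r := ⟨_, rfl⟩
  obtain ⟨v, lam, hvorth, hAx⟩ := spectral_decomp A hA r hr
  have hrp : r < p := by
    have hfr := Module.finrank_eq_rank ℂ (LinearMap.range (A : H →ₗ[ℂ] H))
    rw [← hfr] at hrank2
    rw [← hr]
    exact_mod_cast hrank2
  have hrk : r ≤ k := by omega
  set q : H → ℝ := fun x => ∑ i, lam i * Complex.normSq (inner ℂ (v i) x) with hq_def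
  have hqc : Continuous q := by
    apply continuous_finset_sum
    intro i _
    exact continuous_const.mul
      (Complex.continuous_normSq.comp (Continuous.inner continuous_const continuous_id))
  have hqn : ∀ x : H, q (-x) = q x := by
    intro x
    simp only [hq_def, inner_neg_right, Complex.normSq_neg]
  have hinner : ∀ x : H, (inner ℂ x (A x) : ℂ) = ((q x : ℝ) : ℂ) := by
    intro x
    rw [hAx x, inner_sum, hq_def]
    push_cast
    apply Finset.sum_congr rfl
    intro i _
    rw [inner_smul_right,
      show (inner ℂ x (v i) : ℂ) = (starRingEnd ℂ) (inner ℂ (v i) x) from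
        (inner_conj_symm x (v i)).symm,
      mul_assoc, Complex.mul_conj]
  have hRV : ∀ f : Fin k → H, ∑ j, (c j : ℂ) * (inner ℂ (f j) (A (f j)) : ℂ)
      = ((∑ j, c j * q (f j) : ℝ) : ℂ) := by
    intro f
    push_cast
    apply Finset.sum_congr rfl
    intro j _
    rw [hinner (f j)]
  intro z hz
  obtain ⟨e, he, hze⟩ := hz
  rw [Set.mem_neg]
  set X : Fin r → Fin k → ℝ := fun i j => Complex.normSq (inner ℂ (v i) (e j)) with hX
  have hx0 : ∀ i j, 0 ≤ X i j := fun i j => Complex.normSq_nonneg _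
  have hnsq : ∀ w : ℂ, Complex.normSq w = ‖w‖^2 := fun w => by
    rw [Complex.normSq_eq_norm_sq]
  have hrow : ∀ i, ∑ j, X i j ≤ 1 := by
    intro i
    have hb := Orthonormal.sum_inner_products_le (v i) he (s := Finset.univ)
    have hv1 : ‖v i‖ = 1 := hvorth.1 i
    calc ∑ j, X i j = ∑ j, ‖(inner ℂ (e j) (v i) : ℂ)‖^2 := by
          apply Finset.sum_congr rfl
          intro j _
          simp only [hX]
          rw [hnsq, norm_inner_symm]
      _ ≤ ‖v i‖^2 := hb
      _ = 1 := by rw [hv1]; norm_num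
  have hcol : ∀ j, ∑ i, X i j ≤ 1 := by
    intro j
    have hb := Orthonormal.sum_inner_products_le (e j) hvorth (s := Finset.univ)
    have he1 : ‖e j‖ = 1 := he.1 j
    calc ∑ i, X i j = ∑ i, ‖(inner ℂ (v i) (e j) : ℂ)‖^2 := by
          apply Finset.sum_congr rfl
          intro i _
          simp only [hX]
          rw [hnsq]
      _ ≤ ‖e j‖^2 := hb
      _ = 1 := by rw [he1]; norm_num
  set L : ℝ := ∑ i, lam i * ∑ j, c j * X i j with hL
  have hswap : ∑ j, c j * q (e j) = L := by
    rw [hL]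
    simp only [hq_def, hX]
    calc ∑ j, c j * ∑ i, lam i * Complex.normSq (inner ℂ (v i) (e j))
        = ∑ j, ∑ i, c j * (lam i * Complex.normSq (inner ℂ (v i) (e j))) := by
          apply Finset.sum_congr rfl
          intro j _
          rw [Finset.mul_sum]
      _ = ∑ i, ∑ j, c j * (lam i * Complex.normSq (inner ℂ (v i) (e j))) := Finset.sum_comm
      _ = ∑ i, lam i * ∑ j, c j * Complex.normSq (inner ℂ (v i) (e j)) := by
          apply Finset.sum_congr rfl
          intro i _
          rw [Finset.mul_sum]
          apply Finset.sum_congr rfl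
          intro j _
          ring
  obtain ⟨σ₁, hσ₁inj, hσ₁pair, hbd₁⟩ := core hp1 hpk hk2p c hc hO hrp lam X hx0 hrow hcol
  obtain ⟨σ₂, hσ₂inj, hσ₂pair, hbd₂⟩ := core hp1 hpk hk2p c hc hO hrp
    (fun i => - lam i) X hx0 hrow hcol
  obtain ⟨u, huorth, hufirst, hufill⟩ := extend_frame k r hrk v hvorth e he
  have hqg : ∀ j : Fin k, q (u j) = if h : j.val < r then lam ⟨j.val, h⟩ else 0 := by
    intro j
    by_cases h : j.val < r
    · rw [dif_pos h, hufirst j h]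
      simp only [hq_def]
      have hvo := hvorth
      rw [orthonormal_iff_ite] at hvo
      rw [Finset.sum_eq_single (⟨j.val, h⟩ : Fin r)]
      · rw [hvo]
        simp
      · intro i _ hne
        rw [hvo]
        simp [hne]
      · intro habs
        exact absurd (Finset.mem_univ _) habs
    · rw [dif_neg h]
      simp only [hq_def]
      apply Finset.sum_eq_zero
      intro i _
      rw [hufill j (by omega) i]
      simp
  have hval : ∀ ρ : Equiv.Perm (Fin k),
      ∑ j, c j * q (u (ρ j)) = ∑ i : Fin r, lam i * c (ρ.symm (Fin.castLE hrk i)) := by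
    intro ρ
    have e1 : ∑ j, c j * q (u (ρ j)) = ∑ j', c (ρ.symm j') * q (u j') := by
      rw [← Equiv.sum_comp ρ (fun j' => c (ρ.symm j') * q (u j'))]
      apply Finset.sum_congr rfl
      intro j _
      rw [Equiv.symm_apply_apply]
    rw [e1, sum_fin_left hrk (fun j' => c (ρ.symm j') * q (u j'))
      (by
        intro j' hj'
        show c (ρ.symm j') * q (u j') = 0
        rw [hqg j', dif_neg (by omega)]
        ring)]
    apply Finset.sum_congr rfl
    intro i _
    show c (ρ.symm (Fin.castLE hrk i)) * q (u (Fin.castLE hrk i)) = _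
    rw [hqg (Fin.castLE hrk i),
      dif_pos (show (Fin.castLE hrk i).val < r from i.isLt),
      show (⟨(Fin.castLE hrk i).val, i.isLt⟩ : Fin r) = i from Fin.ext rfl]
    ring
  obtain ⟨π₁, hπ₁⟩ := perm_extend hrk (fun i => flipk (σ₁ i))
    (fun a b hab => hσ₁inj (flipk_invol.injective hab))
  obtain ⟨π₂, hπ₂⟩ := perm_extend hrk (fun i => flipk (σ₂ i))
    (fun a b hab => hσ₂inj (flipk_invol.injective hab))
  have hval₁ : ∑ j, c j * q (u (π₁ j)) = - ∑ i, lam i * c (σ₁ i) := by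
    rw [hval π₁]
    have hsy : ∀ i : Fin r, π₁.symm (Fin.castLE hrk i) = flipk (σ₁ i) := by
      intro i
      rw [Equiv.symm_apply_eq]
      exact (hπ₁ i).symm
    calc ∑ i, lam i * c (π₁.symm (Fin.castLE hrk i))
        = ∑ i, -(lam i * c (σ₁ i)) := by
          apply Finset.sum_congr rfl
          intro i _
          rw [hsy i, hσ₁pair i]
          ring
      _ = - ∑ i, lam i * c (σ₁ i) := Finset.sum_neg_distrib _
  have hval₂ : ∑ j, c j * q (u (π₂ j)) = - ∑ i, lam i * c (σ₂ i) := by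
    rw [hval π₂]
    have hsy : ∀ i : Fin r, π₂.symm (Fin.castLE hrk i) = flipk (σ₂ i) := by
      intro i
      rw [Equiv.symm_apply_eq]
      exact (hπ₂ i).symm
    calc ∑ i, lam i * c (π₂.symm (Fin.castLE hrk i))
        = ∑ i, -(lam i * c (σ₂ i)) := by
          apply Finset.sum_congr rfl
          intro i _
          rw [hsy i, hσ₂pair i]
          ring
      _ = - ∑ i, lam i * c (σ₂ i) := Finset.sum_neg_distrib _
  have hbL : L ≤ ∑ i, lam i * c (σ₁ i) := by
    rw [hL]
    exact hbd₁
  have hw₁ : ∑ j, c j * q (u (π₁ j)) ≤ -L := by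
    rw [hval₁]
    linarith
  have hw₂ : -L ≤ ∑ j, c j * q (u (π₂ j)) := by
    rw [hval₂]
    have hLHS : ∑ i, (- lam i) * ∑ j, c j * X i j = - L := by
      rw [hL, ← Finset.sum_neg_distrib]
      apply Finset.sum_congr rfl
      intro i _
      ring
    have h2 : - L ≤ ∑ i, (- lam i) * c (σ₂ i) := by
      rw [← hLHS]
      exact hbd₂
    have h3 : ∑ i, (- lam i) * c (σ₂ i) = - ∑ i, lam i * c (σ₂ i) := by
      rw [← Finset.sum_neg_distrib]
      apply Finset.sum_congr rfl
      intro i _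
      ring
    linarith
  have hchain := swap_chain k c q hqc hqn (π₂.trans π₁.symm)
    (fun j => u (π₁ j)) (huorth.comp _ π₁.injective)
  have hmid : -L ∈ Set.uIcc (∑ j, c j * q (u (π₁ j)))
      (∑ j, c j * q ((fun j => u (π₁ j)) ((π₂.trans π₁.symm) j))) := by
    have e2 : ∀ j : Fin k, (fun j => u (π₁ j)) ((π₂.trans π₁.symm) j) = u (π₂ j) := by
      intro j
      simp only [Equiv.trans_apply]
      rw [Equiv.apply_symm_apply]
    rw [show (∑ j, c j * q ((fun j => u (π₁ j)) ((π₂.trans π₁.symm) j)))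
        = ∑ j, c j * q (u (π₂ j)) from
      Finset.sum_congr rfl (fun j _ => by rw [e2 j])]
    exact Set.mem_uIcc.2 (Or.inl ⟨hw₁, hw₂⟩)
  obtain ⟨f, hforth, hfval⟩ := hchain hmid
  refine ⟨f, hforth, ?_⟩
  rw [hRV f, ← hfval, hze, hRV e, hswap]
  push_cast
  ring
end

section
/- Let H be a complex Hilbert space and T a bounded linear operator on H. Suppose there is a function h : H × H → {1, −1} such that ⟨Tx, f⟩ = h(x,f)·⟨x, f⟩ for all x, f ∈ H. Then T = I or T = −I. -/
theorem stmt13 {H : Type*} [NormedAddCommGroup H] [InnerProductSpace ℂ H]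
    (T : H →L[ℂ] H) (h : H → H → ℝ)
    (hval : ∀ x f, h x f = 1 ∨ h x f = -1)
    (hT : ∀ x f : H, (inner ℂ f (T x) : ℂ) = (h x f : ℂ) * (inner ℂ f x : ℂ)) :
    T = ContinuousLinearMap.id ℂ H ∨ T = -ContinuousLinearMap.id ℂ H := by
  have claim : ∀ x : H, T x = x ∨ T x = -x := by
    intro x
    set u := T x with hu
    have hxu : (inner ℂ x u : ℂ) = (h x x : ℂ) * inner ℂ x x := hT x x
    have huu : (inner ℂ u u : ℂ) = (h x u : ℂ) * inner ℂ u x := hT x u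
    have hux : (inner ℂ u x : ℂ) = (h x x : ℂ) * inner ℂ x x := by
      have := congrArg (starRingEnd ℂ) hxu
      rw [inner_conj_symm] at this
      rw [this]
      simp [inner_conj_symm, Complex.conj_ofReal, mul_comm]
    have hzero : ∀ (c : ℂ), (inner ℂ u u : ℂ) = -(inner ℂ x x : ℂ) → T x = x ∨ T x = -x := by
      intro _ hneg
      rw [inner_self_eq_norm_sq_to_K u, inner_self_eq_norm_sq_to_K x] at hneg
      have h2 : (‖u‖:ℝ)^2 = -(‖x‖:ℝ)^2 := by
        exact_mod_cast hneg
      have hx0 : x = 0 := by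
        have := sq_nonneg (‖u‖:ℝ); have := sq_nonneg (‖x‖:ℝ)
        have : ‖x‖ = 0 := by nlinarith
        simpa using this
      have hu0 : u = 0 := by
        have : ‖u‖ = 0 := by nlinarith [sq_nonneg (‖u‖:ℝ), norm_nonneg x, h2, hx0]
        simpa using this
      left; rw [← hu, hu0, hx0]
    rcases hval x x with he | he <;> rcases hval x u with hd | hd
    · left
      have : (inner ℂ (u - x) (u - x) : ℂ) = 0 := by
        rw [inner_sub_left, inner_sub_right, inner_sub_right]
        rw [hxu, huu, hux, he, hd]
        push_cast
        ring
      have h3 := inner_self_eq_zero.mp this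
      rwa [sub_eq_zero] at h3
    · refine hzero 0 ?_
      rw [huu, hux, he, hd]; push_cast; ring
    · refine hzero 0 ?_
      rw [huu, hux, he, hd]; push_cast; ring
    · right
      have : (inner ℂ (u + x) (u + x) : ℂ) = 0 := by
        rw [inner_add_left, inner_add_right, inner_add_right]
        rw [hxu, huu, hux, he, hd]
        push_cast
        ring
      have := inner_self_eq_zero.mp this
      rw [add_eq_zero_iff_eq_neg] at this
      exact this
  by_cases hid : ∀ x : H, T x = x
  · left; ext x; simpa using hid x
  · right
    push_neg at hid
    obtain ⟨a, ha⟩ := hid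
    have haneg : T a = -a := (claim a).resolve_left ha
    have ha0 : a ≠ 0 := by
      intro h0; apply ha; rw [h0]; simp
    ext x
    simp only [ContinuousLinearMap.neg_apply, ContinuousLinearMap.id_apply]
    rcases claim x with hx | hx
    · rcases claim (x + a) with hxa | hxa
      · rw [map_add, hx, haneg] at hxa
        have : a = -a := by
          have := hxa
          abel_nf at this ⊢
          linear_combination (norm := module) -this
        have : (2:ℂ) • a = 0 := by
          rw [two_smul]; rw [eq_neg_iff_add_eq_zero] at this; exact_mod_cast this
        exact absurd (by simpa using (smul_eq_zero.mp this).resolve_left (by norm_num)) ha0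
      · rw [map_add, hx, haneg] at hxa
        have hx0 : x = 0 := by
          have h2 : (2:ℂ) • x = 0 := by
            rw [two_smul]
            linear_combination (norm := module) hxa
          simpa using (smul_eq_zero.mp h2).resolve_left (by norm_num)
        rw [hx, hx0, neg_zero]
    · exact hx
end
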